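/- arXiv:2401.03301 — 6 statements merged into one kernel-verified Lean document; each statement's English description precedes it below -/
import Mathlib

section
/- Freedman's inequality (modified form): Let X_1, …, X_T be real-valued random variables with X_t ≤ R almost surely for some R > 0, E[X_t | X_1, …, X_{t−1}] = 0 for all t, and E[X_t² | X_1, …, X_{t−1}] < ∞ almost surely. Define S := Σ_{t=1}^T X_t and V := Σ_{t=1}^T E[X_t² | X_1, …, X_{t−1}]. Then for every δ ∈ (0,1) and every fixed λ ∈ (0, 1/R], with probability at least 1 − δ, S ≤ (e − 2) λ V + ln(1/δ)/λ. -/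
open MeasureTheory
open scoped ENNReal

/-- The σ-algebra generated by `X_1, …, X_{t-1}` (trivial for `t = 1`). -/
def pastSigma {Ω : Type*} (X : ℕ → Ω → ℝ) (t : ℕ) : MeasurableSpace Ω :=
  ⨆ i ∈ Finset.Icc 1 (t - 1), MeasurableSpace.comap (X i) inferInstance

/-!
With `W_n = exp (λ S_n - (e - 2) λ² V_n)`, the bound `exp y ≤ 1 + y + (e - 2) y²` for `y ≤ 1`,
applied to `y = λ X_t ≤ λ R ≤ 1` and combined with `E[X_t | past] = 0`, gives
`E[exp (λ X_t) | past] ≤ 1 + (e - 2) λ² E[X_t² | past] ≤ exp ((e - 2) λ² E[X_t² | past])`.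
Hence `W` is a supermartingale started at `1`, so `E W_T ≤ 1`, and Markov's inequality gives
`P(W_T ≥ 1/δ) ≤ δ`; outside that event, taking logarithms and dividing by `λ` is the claim.
-/

open Real
open scoped Nat

theorem Real.exp_le_one_add_add_sq_div_two_of_nonpos {y : ℝ} (hy : y ≤ 0) :
    exp y ≤ 1 + y + y ^ 2 / 2 := by
  have hneg : 1 + -y + (-y) ^ 2 / 2 ≤ exp (-y) := quadratic_le_exp_of_nonneg (neg_nonneg.2 hy)
  have hprod : exp y * exp (-y) = 1 := by rw [← exp_add, add_neg_cancel, exp_zero]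
  nlinarith [exp_pos y, sq_nonneg (y ^ 2)]

theorem Real.exp_le_one_add_add_exp_one_sub_two_mul_sq {y : ℝ} (hy : y ≤ 1) :
    exp y ≤ 1 + y + (exp 1 - 2) * y ^ 2 := by
  rcases le_or_gt y 0 with hy0 | hy0
  · have : 1 + 1 + 1 ^ 2 / 2 ≤ exp 1 := quadratic_le_exp_of_nonneg zero_le_one
    nlinarith [exp_le_one_add_add_sq_div_two_of_nonpos hy0, sq_nonneg y]
  · -- compare the tails `∑_{n ≥ 2} y ^ n / n!` and `y ^ 2 ∑_{n ≥ 2} 1 / n!` termwise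
    have tail (x : ℝ) : HasSum (fun n => x ^ (n + 2) / (n + 2)!) (exp x - (1 + x)) := by
      have := (hasSum_nat_add_iff' 2).2 (Real.exp_eq_exp_ℝ ▸ NormedSpace.expSeries_div_hasSum_exp x)
      simpa [Finset.sum_range_succ] using this
    have hcmp := hasSum_le (fun n => ?_) (tail y) ((tail 1).mul_left (y ^ 2))
    · linarith
    · rw [one_pow, mul_one_div]
      exact div_le_div_of_nonneg_right (pow_le_pow_of_le_one hy0.le hy (by omega)) (by positivity)

section

variable {Ω : Type*} {m0 : MeasurableSpace Ω} {μ : Measure Ω}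

theorem integrable_exp_of_ae_le [IsFiniteMeasure μ] {f : Ω → ℝ} (hf : AEStronglyMeasurable f μ)
    {C : ℝ} (hC : ∀ᵐ ω ∂μ, f ω ≤ C) : Integrable (fun ω => exp (f ω)) μ := by
  refine Integrable.mono' (integrable_const (exp C))
    (continuous_exp.comp_aestronglyMeasurable hf) ?_
  filter_upwards [hC] with ω hω
  rw [norm_of_nonneg (exp_pos _).le]
  exact exp_le_exp.2 hω

theorem condExp_exp_mul_le [IsFiniteMeasure μ] {X : Ω → ℝ} (hX : AEStronglyMeasurable X μ)
    {F : MeasurableSpace Ω} (hF : F ≤ m0) {lam : ℝ} (hlamX : ∀ᵐ ω ∂μ, lam * X ω ≤ 1)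
    (hsq : Integrable (fun ω => X ω ^ 2) μ) (hmean : μ[X|F] =ᵐ[μ] 0) :
    μ[fun ω => exp (lam * X ω)|F] ≤ᵐ[μ]
      fun ω => exp ((exp 1 - 2) * lam ^ 2 * μ[fun ω => X ω ^ 2|F] ω) := by
  set c := (exp 1 - 2) * lam ^ 2
  have hXint : Integrable X μ := ((memLp_two_iff_integrable_sq hX).2 hsq).integrable one_le_two
  have hquad : μ[fun ω => exp (lam * X ω)|F] ≤ᵐ[μ]
      μ[(fun _ => (1 : ℝ)) + lam • X + c • fun ω => X ω ^ 2|F] := by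
    refine condExp_mono (integrable_exp_of_ae_le (hX.const_mul lam) hlamX)
      (((integrable_const 1).add (hXint.smul lam)).add (hsq.smul c)) ?_
    filter_upwards [hlamX] with ω hω
    refine (exp_le_one_add_add_exp_one_sub_two_mul_sq hω).trans_eq ?_
    simp only [Pi.add_apply, Pi.smul_apply, smul_eq_mul, c]
    ring
  have hlin : μ[(fun _ => (1 : ℝ)) + lam • X + c • (fun ω => X ω ^ 2)|F] =ᵐ[μ]
      (fun _ => (1 : ℝ)) + lam • μ[X|F] + c • μ[fun ω => X ω ^ 2|F] := by
    filter_upwards [condExp_add ((integrable_const 1).add (hXint.smul lam)) (hsq.smul c) F,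
      condExp_add (integrable_const 1) (hXint.smul lam) F, condExp_smul lam X F,
      condExp_smul c (fun ω => X ω ^ 2) F] with ω h₁ h₂ h₃ h₄
    simp only [h₁, Pi.add_apply, h₂, h₃, h₄, condExp_const hF]
  filter_upwards [hquad, hlin, hmean] with ω hω hlinω hmeanω
  rw [hlinω] at hω
  simp only [Pi.add_apply, Pi.smul_apply, hmeanω, Pi.zero_apply, smul_eq_mul, mul_zero,
    add_zero] at hω
  linarith [add_one_le_exp (c * μ[fun ω => X ω ^ 2|F] ω)]

theorem integral_mul_le_of_condExp_le {F : MeasurableSpace Ω} (hF : F ≤ m0)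
    [SigmaFinite (μ.trim hF)] {A Z B : Ω → ℝ} (hA : StronglyMeasurable[F] A) (hA0 : 0 ≤ᵐ[μ] A)
    (hAZ : Integrable (A * Z) μ) (hZ : Integrable Z μ) (hAB : Integrable (A * B) μ)
    (hZB : μ[Z|F] ≤ᵐ[μ] B) : ∫ ω, (A * Z) ω ∂μ ≤ ∫ ω, (A * B) ω ∂μ := by
  have hpull : μ[A * Z|F] =ᵐ[μ] A * μ[Z|F] := condExp_mul_of_stronglyMeasurable_left hA hAZ hZ
  calc ∫ ω, (A * Z) ω ∂μ = ∫ ω, μ[A * Z|F] ω ∂μ := (integral_condExp hF).symm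
    _ ≤ ∫ ω, (A * B) ω ∂μ := by
      refine integral_mono_ae integrable_condExp hAB ?_
      filter_upwards [hpull, hA0, hZB] with ω h h0 hB
      rw [h]
      exact mul_le_mul_of_nonneg_left hB h0

theorem ofReal_one_sub_le_measure_lt_one_div [IsProbabilityMeasure μ] {f : Ω → ℝ}
    (hf0 : 0 ≤ᵐ[μ] f) (hf : Integrable f μ) (hf1 : ∫ ω, f ω ∂μ ≤ 1) {δ : ℝ} (hδ : 0 < δ) :
    ENNReal.ofReal (1 - δ) ≤ μ {ω | f ω < 1 / δ} := by
  have hmarkov : μ {ω | 1 / δ ≤ f ω} ≤ ENNReal.ofReal δ := by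
    refine (ENNReal.le_ofReal_iff_toReal_le (measure_ne_top μ _) hδ.le).2 ?_
    have := (mul_meas_ge_le_integral_of_nonneg hf0 hf (1 / δ)).trans hf1
    rw [one_div, inv_mul_le_iff₀ hδ, mul_one] at this
    simpa only [measureReal_def, one_div] using this
  have hcover : 1 ≤ μ {ω | f ω < 1 / δ} + μ {ω | 1 / δ ≤ f ω} := by
    rw [← measure_univ (μ := μ)]
    refine (measure_mono fun ω _ => ?_).trans (measure_union_le _ _)
    exact (lt_or_ge (f ω) (1 / δ)).imp id id
  rw [ENNReal.ofReal_sub _ hδ.le, ENNReal.ofReal_one, tsub_le_iff_right]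
  exact hcover.trans (add_le_add_right hmarkov _)

end

section pastSigma

variable {Ω : Type*} (X : ℕ → Ω → ℝ)

theorem pastSigma_le [m0 : MeasurableSpace Ω] (hX : ∀ t, Measurable (X t)) (t : ℕ) :
    pastSigma X t ≤ m0 :=
  iSup₂_le fun i _ => (hX i).comap_le

theorem pastSigma_mono : Monotone (pastSigma X) := fun s t hst =>
  biSup_mono fun i hi => by simp only [Finset.mem_Icc] at hi ⊢; omega

theorem measurable_pastSigma {i t : ℕ} (hi : i ∈ Finset.Icc 1 (t - 1)) :
    Measurable[pastSigma X t] (X i) :=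
  measurable_iff_comap_le.2 <| le_iSup₂ (f := fun i (_ : i ∈ Finset.Icc 1 (t - 1)) =>
    MeasurableSpace.comap (X i) inferInstance) i hi

end pastSigma

section freedmanProcess

variable {Ω : Type*} [m0 : MeasurableSpace Ω] (μ : Measure Ω) (X : ℕ → Ω → ℝ) (lam : ℝ)

/-- `exp (λ S_n - (e - 2) λ² V_n)`, a nonnegative supermartingale for the past σ-algebras. -/
noncomputable def freedmanProcess (n : ℕ) (ω : Ω) : ℝ :=
  exp (∑ t ∈ Finset.Icc 1 n,
    (lam * X t ω - (exp 1 - 2) * lam ^ 2 * μ[fun ω' => X t ω' ^ 2|pastSigma X t] ω))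

theorem freedmanProcess_nonneg (n : ℕ) (ω : Ω) : 0 ≤ freedmanProcess μ X lam n ω :=
  (exp_pos _).le

theorem freedmanProcess_succ (n : ℕ) (ω : Ω) :
    freedmanProcess μ X lam (n + 1) ω =
      freedmanProcess μ X lam n ω *
        exp (-((exp 1 - 2) * lam ^ 2 * μ[fun ω' => X (n + 1) ω' ^ 2|pastSigma X (n + 1)] ω)) *
        exp (lam * X (n + 1) ω) := by
  simp only [freedmanProcess, Finset.sum_Icc_succ_top (Nat.le_add_left 1 n), ← exp_add]
  ring_nf

theorem measurable_freedmanProcess (n : ℕ) :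
    Measurable[pastSigma X (n + 1)] (freedmanProcess μ X lam n) := by
  refine Measurable.exp (Finset.measurable_sum _ fun t ht => ?_)
  rw [Finset.mem_Icc] at ht
  refine ((measurable_pastSigma X ?_).const_mul lam).sub (Measurable.const_mul ?_ _)
  · simpa using ht
  · exact (stronglyMeasurable_condExp.mono (pastSigma_mono X (by omega))).measurable

theorem freedmanProcess_le_exp {n : ℕ}
    (hlamX : ∀ t ∈ Finset.Icc 1 n, ∀ᵐ ω ∂μ, lam * X t ω ≤ 1) :
    ∀ᵐ ω ∂μ, freedmanProcess μ X lam n ω ≤ exp n := by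
  have he : (0 : ℝ) ≤ exp 1 - 2 := by linarith [add_one_le_exp (1 : ℝ)]
  have hinc : ∀ᵐ ω ∂μ, ∀ t ∈ Finset.Icc 1 n,
      lam * X t ω - (exp 1 - 2) * lam ^ 2 * μ[fun ω' => X t ω' ^ 2|pastSigma X t] ω ≤ 1 := by
    refine (Filter.eventually_all_finset _).2 fun t ht => ?_
    filter_upwards [hlamX t ht, condExp_nonneg (m := pastSigma X t)
      (ae_of_all μ fun ω => sq_nonneg (X t ω))] with ω h hσ
    nlinarith [mul_nonneg (mul_nonneg he (sq_nonneg lam)) hσ]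
  filter_upwards [hinc] with ω h
  refine exp_le_exp.2 ((Finset.sum_le_card_nsmul _ _ 1 h).trans_eq ?_)
  simp

theorem integrable_freedmanProcess [IsFiniteMeasure μ] (hX : ∀ t, Measurable (X t)) {n : ℕ}
    (hlamX : ∀ t ∈ Finset.Icc 1 n, ∀ᵐ ω ∂μ, lam * X t ω ≤ 1) :
    Integrable (freedmanProcess μ X lam n) μ := by
  refine Integrable.mono' (integrable_const (exp n))
    ((measurable_freedmanProcess μ X lam n).mono (pastSigma_le X hX _) le_rfl).aestronglyMeasurable
    ?_
  filter_upwards [freedmanProcess_le_exp μ X lam hlamX] with ω h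
  rwa [norm_of_nonneg (freedmanProcess_nonneg μ X lam n ω)]

theorem integral_freedmanProcess_le_one [IsProbabilityMeasure μ] (hX : ∀ t, Measurable (X t))
    {n : ℕ} (hlamX : ∀ t ∈ Finset.Icc 1 n, ∀ᵐ ω ∂μ, lam * X t ω ≤ 1)
    (hsq : ∀ t ∈ Finset.Icc 1 n, Integrable (fun ω => X t ω ^ 2) μ)
    (hmean : ∀ t ∈ Finset.Icc 1 n, μ[X t|pastSigma X t] =ᵐ[μ] 0) :
    ∫ ω, freedmanProcess μ X lam n ω ∂μ ≤ 1 := by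
  induction n with
  | zero => simp [freedmanProcess]
  | succ n ih =>
    have hpast : Finset.Icc 1 n ⊆ Finset.Icc 1 (n + 1) := Finset.Icc_subset_Icc_right n.le_succ
    have hnew : n + 1 ∈ Finset.Icc 1 (n + 1) := by simp
    set σ := μ[fun ω' => X (n + 1) ω' ^ 2|pastSigma X (n + 1)]
    set c := (exp 1 - 2) * lam ^ 2
    -- `W (n+1) = A * exp (λ X_{n+1})` with `A` known at time `n + 1`, and `A * exp (c σ) = W n`
    set A := fun ω => freedmanProcess μ X lam n ω * exp (-(c * σ ω))
    have hAZ : A * (fun ω => exp (lam * X (n + 1) ω)) = freedmanProcess μ X lam (n + 1) :=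
      funext fun ω => (freedmanProcess_succ μ X lam n ω).symm
    have hAB : A * (fun ω => exp (c * σ ω)) = freedmanProcess μ X lam n :=
      funext fun ω => by simp [A, mul_assoc, ← exp_add]
    have hA : StronglyMeasurable[pastSigma X (n + 1)] A :=
      ((measurable_freedmanProcess μ X lam n).mul
        (stronglyMeasurable_condExp.measurable.const_mul c).neg.exp).stronglyMeasurable
    calc ∫ ω, freedmanProcess μ X lam (n + 1) ω ∂μ
        = ∫ ω, (A * fun ω => exp (lam * X (n + 1) ω)) ω ∂μ := by rw [hAZ]
      _ ≤ ∫ ω, (A * fun ω => exp (c * σ ω)) ω ∂μ := by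
        refine integral_mul_le_of_condExp_le (pastSigma_le X hX _) hA
          (ae_of_all μ fun ω => mul_nonneg (freedmanProcess_nonneg μ X lam n ω) (exp_pos _).le)
          (hAZ ▸ integrable_freedmanProcess μ X lam hX hlamX)
          (integrable_exp_of_ae_le ((hX _).const_mul lam).aestronglyMeasurable (hlamX _ hnew))
          (hAB ▸ integrable_freedmanProcess μ X lam hX fun t ht => hlamX t (hpast ht))
          (condExp_exp_mul_le (hX _).aestronglyMeasurable (pastSigma_le X hX _) (hlamX _ hnew)
            (hsq _ hnew) (hmean _ hnew))
      _ = ∫ ω, freedmanProcess μ X lam n ω ∂μ := by rw [hAB]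
      _ ≤ 1 := ih (fun t ht => hlamX t (hpast ht)) (fun t ht => hsq t (hpast ht))
          (fun t ht => hmean t (hpast ht))

end freedmanProcess

theorem freedman_inequality_general
    {Ω : Type*} [m0 : MeasurableSpace Ω] (μ : Measure Ω) [IsProbabilityMeasure μ]
    (T : ℕ) (X : ℕ → Ω → ℝ) (hX : ∀ t, Measurable (X t))
    (R : ℝ)
    (hbdd : ∀ t ∈ Finset.Icc 1 T, ∀ᵐ ω ∂μ, X t ω ≤ R)
    (hsq : ∀ t ∈ Finset.Icc 1 T, Integrable (fun ω => (X t ω) ^ 2) μ)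
    (hmean : ∀ t ∈ Finset.Icc 1 T, μ[X t | pastSigma X t] =ᵐ[μ] 0)
    (δ lam : ℝ) (hδ : δ ∈ Set.Ioo (0 : ℝ) 1) (hlam : lam ∈ Set.Ioc (0 : ℝ) (1 / R)) :
    ENNReal.ofReal (1 - δ) ≤
      μ {ω | ∑ t ∈ Finset.Icc 1 T, X t ω ≤
          (Real.exp 1 - 2) * lam *
            (∑ t ∈ Finset.Icc 1 T, (μ[fun ω' => (X t ω') ^ 2 | pastSigma X t]) ω)
          + Real.log (1 / δ) / lam} := by
  obtain ⟨hδ0, -⟩ := hδ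
  obtain ⟨hlam0, hlamR⟩ := hlam
  have hlamX : ∀ t ∈ Finset.Icc 1 T, ∀ᵐ ω ∂μ, lam * X t ω ≤ 1 := by
    have hlamR' : lam * R ≤ 1 := (le_div_iff₀ (one_div_pos.1 (hlam0.trans_le hlamR))).1 hlamR
    exact fun t ht => (hbdd t ht).mono fun ω h =>
      (mul_le_mul_of_nonneg_left h hlam0.le).trans hlamR'
  refine (ofReal_one_sub_le_measure_lt_one_div (ae_of_all μ (freedmanProcess_nonneg μ X lam T))
    (integrable_freedmanProcess μ X lam hX hlamX)
    (integral_freedmanProcess_le_one μ X lam hX hlamX hsq hmean) hδ0).trans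
    (measure_mono fun ω hω => ?_)
  have hlog := (lt_log_iff_exp_lt (by positivity)).2 hω
  rw [Finset.sum_sub_distrib, ← Finset.mul_sum, ← Finset.mul_sum] at hlog
  rw [Set.mem_ofPred_eq, add_div' _ _ _ hlam0.ne', le_div_iff₀ hlam0]
  linear_combination hlog.le

/-- **Freedman's inequality (modified form).**  If `X_1, …, X_T` satisfy `X_t ≤ R` a.s.,
have conditional mean zero and (conditionally integrable) second moments, then for any
`δ ∈ (0,1)` and any fixed `λ ∈ (0, 1/R]`, with probability at least `1 − δ`,
`S ≤ (e − 2) λ V + ln(1/δ)/λ` where `S = Σ_t X_t` and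
`V = Σ_t E[X_t² | X_1, …, X_{t-1}]`. -/
theorem freedman_inequality
    {Ω : Type*} [m0 : MeasurableSpace Ω] (μ : Measure Ω) [IsProbabilityMeasure μ]
    (T : ℕ) (X : ℕ → Ω → ℝ) (hX : ∀ t, Measurable (X t))
    (R : ℝ) (hR : 0 < R)
    (hbdd : ∀ t ∈ Finset.Icc 1 T, ∀ᵐ ω ∂μ, X t ω ≤ R)
    (hsq : ∀ t ∈ Finset.Icc 1 T, Integrable (fun ω => (X t ω) ^ 2) μ)
    (hmean : ∀ t ∈ Finset.Icc 1 T, μ[X t | pastSigma X t] =ᵐ[μ] 0)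
    (δ lam : ℝ) (hδ : δ ∈ Set.Ioo (0 : ℝ) 1) (hlam : lam ∈ Set.Ioc (0 : ℝ) (1 / R)) :
    ENNReal.ofReal (1 - δ) ≤
      μ {ω | ∑ t ∈ Finset.Icc 1 T, X t ω ≤
          (Real.exp 1 - 2) * lam *
            (∑ t ∈ Finset.Icc 1 T, (μ[fun ω' => (X t ω') ^ 2 | pastSigma X t]) ω)
          + Real.log (1 / δ) / lam} :=
  freedman_inequality_general (m0 := m0) μ T X hX R hbdd hsq hmean δ lam hδ hlam
end

section
/- Variance condition for least squares: Let (X, Y) be random variables with Y real-valued and let f* be a (fixed measurable version of the) conditional mean f*(x) = E[Y | X = x]. Let f be a measurable real-valued function such that (f(X) − Y)² ≤ M² almost surely and (f*(X) − Y)² ≤ B² almost surely, for constants M, B > 0. Define φ := (f(X) − Y)² − (f*(X) − Y)². Then almost surely: E[φ | X] = (f(X) − f*(X))², and E[φ² | X] ≤ 2(M² + B²) · E[φ | X]. -/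
/-!
Write `a = F - Y` and `b = G - Y`, where `F = f(X)` and `G = f*(X) = E[Y | X]`. Then
`φ = a² - b² = (F - G)² + 2 (F - G) b`, and the cross term has zero conditional expectation:
`F - G` is `σ(X)`-measurable and pulls out, while `E[b | X] = 0`. Moreover
`φ² = (a + b)² (a - b)²` with `(a + b)² ≤ 2 (a² + b²) ≤ 2 (M² + B²)` and `a - b = F - G`, so
`φ² ≤ 2 (M² + B²) (F - G)²`, and monotonicity of the conditional expectation finishes the proof.
-/

open MeasureTheory
open scoped ENNReal

theorem sq_sub_sq_sq_le_of_sq_le {a b M B : ℝ} (ha : a ^ 2 ≤ M ^ 2) (hb : b ^ 2 ≤ B ^ 2) :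
    (a ^ 2 - b ^ 2) ^ 2 ≤ 2 * (M ^ 2 + B ^ 2) * (a - b) ^ 2 := by
  have hsum : (a + b) ^ 2 ≤ 2 * (M ^ 2 + B ^ 2) := by nlinarith [sq_nonneg (a - b)]
  calc (a ^ 2 - b ^ 2) ^ 2 = (a + b) ^ 2 * (a - b) ^ 2 := by ring
    _ ≤ 2 * (M ^ 2 + B ^ 2) * (a - b) ^ 2 := by gcongr

section

variable {Ω : Type*} {m mΩ : MeasurableSpace Ω} {μ : Measure Ω}

theorem memLp_of_ae_sq_le [IsFiniteMeasure μ] {f : Ω → ℝ} (hf : AEStronglyMeasurable f μ)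
    {C : ℝ} (hC : ∀ᵐ ω ∂μ, f ω ^ 2 ≤ C ^ 2) (p : ℝ≥0∞) : MemLp f p μ :=
  .of_bound hf |C| (by filter_upwards [hC] with ω hω using sq_le_sq.mp hω)

theorem condExp_sub_ae_eq_zero_of_ae_eq_condExp (hm : m ≤ mΩ) [SigmaFinite (μ.trim hm)]
    {Y G : Ω → ℝ} (hY : Integrable Y μ) (hG : G =ᵐ[μ] μ[Y | m]) :
    μ[G - Y | m] =ᵐ[μ] 0 := by
  have hGm : AEStronglyMeasurable[m] G μ :=
    stronglyMeasurable_condExp.aestronglyMeasurable.congr hG.symm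
  have hGi : Integrable G μ := integrable_condExp.congr hG.symm
  filter_upwards [condExp_sub hGi hY m, condExp_of_aestronglyMeasurable' hm hGm hGi, hG]
    with ω hsub hGG hGY
  simp [hsub, hGG, hGY]

theorem condExp_sq_sub_sq_ae_eq (hm : m ≤ mΩ) [SigmaFinite (μ.trim hm)]
    {Y F G : Ω → ℝ} (hY : Integrable Y μ) (hF : AEStronglyMeasurable[m] F μ)
    (hG : G =ᵐ[μ] μ[Y | m]) (hFY : MemLp (F - Y) 2 μ) (hGY : MemLp (G - Y) 2 μ) :
    μ[fun ω => (F ω - Y ω) ^ 2 - (G ω - Y ω) ^ 2 | m] =ᵐ[μ] fun ω => (F ω - G ω) ^ 2 := by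
  have hGm : AEStronglyMeasurable[m] G μ :=
    stronglyMeasurable_condExp.aestronglyMeasurable.congr hG.symm
  have hGi : Integrable G μ := integrable_condExp.congr hG.symm
  have hFG : MemLp (F - G) 2 μ := by simpa using hFY.sub hGY
  set H : Ω → ℝ := fun ω => 2 * (F ω - G ω)
  have hHm : AEStronglyMeasurable[m] H μ := (hF.sub hGm).const_mul 2
  have hHGY : Integrable (H * (G - Y)) μ := (hFG.const_mul 2).integrable_mul hGY
  have hsq : μ[fun ω => (F ω - G ω) ^ 2 | m] =ᵐ[μ] fun ω => (F ω - G ω) ^ 2 :=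
    condExp_of_aestronglyMeasurable' hm ((hF.sub hGm).pow 2) hFG.integrable_sq
  have hcross : μ[H * (G - Y) | m] =ᵐ[μ] 0 := by
    filter_upwards [condExp_mul_of_aestronglyMeasurable_left hHm hHGY (hGi.sub hY),
      condExp_sub_ae_eq_zero_of_ae_eq_condExp hm hY hG] with ω hpull hzero
    simp [hpull, hzero]
  calc μ[fun ω => (F ω - Y ω) ^ 2 - (G ω - Y ω) ^ 2 | m]
      = μ[(fun ω => (F ω - G ω) ^ 2) + H * (G - Y) | m] := by
        congr 1; funext ω; simp only [H, Pi.add_apply, Pi.mul_apply, Pi.sub_apply]; ring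
    _ =ᵐ[μ] μ[fun ω => (F ω - G ω) ^ 2 | m] + μ[H * (G - Y) | m] :=
        condExp_add hFG.integrable_sq hHGY m
    _ =ᵐ[μ] (fun ω => (F ω - G ω) ^ 2) + 0 := hsq.add hcross
    _ = fun ω => (F ω - G ω) ^ 2 := add_zero _

theorem leastSquares_variance_condition [IsFiniteMeasure μ] (hm : m ≤ mΩ) {Y F G : Ω → ℝ}
    (hY : Integrable Y μ) (hF : AEStronglyMeasurable[m] F μ) (hG : G =ᵐ[μ] μ[Y | m])
    {M B : ℝ} (hFb : ∀ᵐ ω ∂μ, (F ω - Y ω) ^ 2 ≤ M ^ 2)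
    (hGb : ∀ᵐ ω ∂μ, (G ω - Y ω) ^ 2 ≤ B ^ 2) :
    (μ[fun ω => (F ω - Y ω) ^ 2 - (G ω - Y ω) ^ 2 | m] =ᵐ[μ] fun ω => (F ω - G ω) ^ 2)
    ∧ ∀ᵐ ω ∂μ, μ[fun ω' => ((F ω' - Y ω') ^ 2 - (G ω' - Y ω') ^ 2) ^ 2 | m] ω
        ≤ 2 * (M ^ 2 + B ^ 2) * μ[fun ω' => (F ω' - Y ω') ^ 2 - (G ω' - Y ω') ^ 2 | m] ω := by
  have hGm : AEStronglyMeasurable[m] G μ :=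
    stronglyMeasurable_condExp.aestronglyMeasurable.congr hG.symm
  have hFY : MemLp (F - Y) 2 μ := memLp_of_ae_sq_le ((hF.mono hm).sub hY.1) hFb 2
  have hGY : MemLp (G - Y) 2 μ := memLp_of_ae_sq_le ((hGm.mono hm).sub hY.1) hGb 2
  have hmean := condExp_sq_sub_sq_ae_eq hm hY hF hG hFY hGY
  refine ⟨hmean, ?_⟩
  set C := 2 * (M ^ 2 + B ^ 2)
  have hFG : MemLp (F - G) 2 μ := by simpa using hFY.sub hGY
  have hCFG : Integrable (fun ω => C * (F ω - G ω) ^ 2) μ := hFG.integrable_sq.const_mul C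
  have hbound : ∀ᵐ ω ∂μ, ((F ω - Y ω) ^ 2 - (G ω - Y ω) ^ 2) ^ 2 ≤ C * (F ω - G ω) ^ 2 := by
    filter_upwards [hFb, hGb] with ω hFω hGω
    simpa using sq_sub_sq_sq_le_of_sq_le hFω hGω
  have hφsq : Integrable (fun ω => ((F ω - Y ω) ^ 2 - (G ω - Y ω) ^ 2) ^ 2) μ :=
    hCFG.mono' (((hFY.1.pow 2).sub (hGY.1.pow 2)).pow 2)
      (hbound.mono fun ω h => by rwa [Real.norm_of_nonneg (sq_nonneg _)])
  have hCFG_condExp : μ[fun ω => C * (F ω - G ω) ^ 2 | m] =ᵐ[μ] fun ω => C * (F ω - G ω) ^ 2 :=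
    condExp_of_aestronglyMeasurable' hm (((hF.sub hGm).pow 2).const_mul C) hCFG
  filter_upwards [condExp_mono hφsq hCFG hbound, hCFG_condExp, hmean] with ω hmono hC hφ
  rw [hφ]
  exact hmono.trans_eq hC

end

theorem variance_condition_least_squares_general
    {Ω 𝒳 : Type*} [MeasurableSpace Ω] [MeasurableSpace 𝒳]
    (μ : Measure Ω) [IsProbabilityMeasure μ]
    (X : Ω → 𝒳) (Y : Ω → ℝ) (hX : Measurable X)
    (hYint : Integrable Y μ)
    (fstar : 𝒳 → ℝ)
    (hfstar : (fun ω => fstar (X ω)) =ᵐ[μ] μ[Y | MeasurableSpace.comap X inferInstance])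
    (f : 𝒳 → ℝ) (hf : Measurable f)
    (M B : ℝ)
    (hfb : ∀ᵐ ω ∂μ, (f (X ω) - Y ω) ^ 2 ≤ M ^ 2)
    (hfsb : ∀ᵐ ω ∂μ, (fstar (X ω) - Y ω) ^ 2 ≤ B ^ 2) :
    (μ[fun ω => (f (X ω) - Y ω) ^ 2 - (fstar (X ω) - Y ω) ^ 2 |
        MeasurableSpace.comap X inferInstance]
      =ᵐ[μ] fun ω => (f (X ω) - fstar (X ω)) ^ 2)
    ∧ ∀ᵐ ω ∂μ,
        (μ[fun ω' => ((f (X ω') - Y ω') ^ 2 - (fstar (X ω') - Y ω') ^ 2) ^ 2 |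
            MeasurableSpace.comap X inferInstance]) ω
          ≤ 2 * (M ^ 2 + B ^ 2) *
            (μ[fun ω' => (f (X ω') - Y ω') ^ 2 - (fstar (X ω') - Y ω') ^ 2 |
                MeasurableSpace.comap X inferInstance]) ω :=
  leastSquares_variance_condition hX.comap_le hYint
    (hf.comp (comap_measurable X)).aestronglyMeasurable hfstar hfb hfsb

/-- **Variance condition for least squares.**  If `f*` is (a measurable version of) the
conditional mean of `Y` given `X`, `(f(X) − Y)² ≤ M²` a.s. and `(f*(X) − Y)² ≤ B²` a.s.,
then with `φ = (f(X) − Y)² − (f*(X) − Y)²` one has `E[φ | X] = (f(X) − f*(X))²` a.s. and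
`E[φ² | X] ≤ 2 (M² + B²) E[φ | X]` a.s. -/
theorem variance_condition_least_squares
    {Ω 𝒳 : Type*} [MeasurableSpace Ω] [MeasurableSpace 𝒳]
    (μ : Measure Ω) [IsProbabilityMeasure μ]
    (X : Ω → 𝒳) (Y : Ω → ℝ) (hX : Measurable X) (hY : Measurable Y)
    (hYint : Integrable Y μ)
    (fstar : 𝒳 → ℝ) (hfstarMeas : Measurable fstar)
    (hfstar : (fun ω => fstar (X ω)) =ᵐ[μ] μ[Y | MeasurableSpace.comap X inferInstance])
    (f : 𝒳 → ℝ) (hf : Measurable f)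
    (M B : ℝ) (hM : 0 < M) (hB : 0 < B)
    (hfb : ∀ᵐ ω ∂μ, (f (X ω) - Y ω) ^ 2 ≤ M ^ 2)
    (hfsb : ∀ᵐ ω ∂μ, (fstar (X ω) - Y ω) ^ 2 ≤ B ^ 2) :
    (μ[fun ω => (f (X ω) - Y ω) ^ 2 - (fstar (X ω) - Y ω) ^ 2 |
        MeasurableSpace.comap X inferInstance]
      =ᵐ[μ] fun ω => (f (X ω) - fstar (X ω)) ^ 2)
    ∧ ∀ᵐ ω ∂μ,
        (μ[fun ω' => ((f (X ω') - Y ω') ^ 2 - (fstar (X ω') - Y ω') ^ 2) ^ 2 |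
            MeasurableSpace.comap X inferInstance]) ω
          ≤ 2 * (M ^ 2 + B ^ 2) *
            (μ[fun ω' => (f (X ω') - Y ω') ^ 2 - (fstar (X ω') - Y ω') ^ 2 |
                MeasurableSpace.comap X inferInstance]) ω :=
  variance_condition_least_squares_general μ X Y hX hYint fstar hfstar f hf M B hfb hfsb
end

section
/- Improved online-to-batch conversion for non-negative random variables: Let {X_k}_{k=1}^K be a real-valued stochastic process adapted to a filtration {F_k} (X_k is F_k-measurable) with X_k ∈ [0, H] almost surely for some H > 0, and suppose KH ≥ 2. Then for any δ ∈ (0,1), with probability at least 1 − δ: Σ_{k=1}^K E[X_k | F_{k−1}] ≤ 2 Σ_{k=1}^K X_k + (16/3) H log(log₂(KH)/δ) + 2. -/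
/-!
Take `λ = log 2 / H` and `c = 1 / (2H)`. On `[0, H]` the convexity of `exp` gives
`exp (-λ x) ≤ 1 - c x`, hence `E[exp (-λ X_k) | F_{k-1}] ≤ 1 - c E[X_k | F_{k-1}]`; together with
`exp a * (1 - a) ≤ 1` this makes `exp (∑_{k ≤ n} (c E[X_k | F_{k-1}] - λ X_k))` a supermartingale
started at `1`. Chernoff's bound then gives, with probability at least `1 - δ`,
`∑ E[X_k | F_{k-1}] ≤ 2 log 2 ∑ X_k + 2H log (1/δ)`, which implies the claim as `log₂ (KH) ≥ 1`.
-/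

open MeasureTheory ProbabilityTheory Real Finset

lemma exp_neg_mul_le_one_sub_mul {lam c H x : ℝ} (hH : 0 < H)
    (hc : c * H ≤ 1 - exp (-(lam * H))) (hx : x ∈ Set.Icc 0 H) :
    exp (-(lam * x)) ≤ 1 - c * x := by
  have ht0 : 0 ≤ x / H := div_nonneg hx.1 hH.le
  have ht1 : x / H ≤ 1 := (div_le_one hH).2 hx.2
  have hchord := convexOn_exp.2 (Set.mem_univ 0) (Set.mem_univ (-(lam * H)))
    (sub_nonneg.2 ht1) ht0 (sub_add_cancel 1 (x / H))
  have hpt : (1 - x / H) • (0 : ℝ) + (x / H) • -(lam * H) = -(lam * x) := by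
    simp only [smul_eq_mul]; field_simp; ring
  rw [hpt, exp_zero, smul_eq_mul, smul_eq_mul] at hchord
  have hcx : c * x = x / H * (c * H) := by field_simp
  nlinarith

lemma exp_mul_one_sub_le_one (a : ℝ) : exp a * (1 - a) ≤ 1 := by
  calc exp a * (1 - a) ≤ exp a * exp (-a) := by gcongr; exact one_sub_le_exp_neg a
    _ = 1 := by rw [← exp_add, add_neg_cancel, exp_zero]

section ConditionalBounds

variable {Ω : Type*} {m m0 : MeasurableSpace Ω} {μ : Measure Ω} [IsFiniteMeasure μ]
  {lam c H : ℝ} {Y : Ω → ℝ}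

lemma integrable_of_ae_mem_Icc (hY : AEStronglyMeasurable Y μ)
    (hYb : ∀ᵐ ω ∂μ, Y ω ∈ Set.Icc 0 H) : Integrable Y μ :=
  .of_bound hY H (hYb.mono fun _ h => (norm_of_nonneg h.1).trans_le h.2)

lemma integrable_exp_neg_mul (hlam : 0 ≤ lam) (hY : AEStronglyMeasurable Y μ)
    (hY0 : ∀ᵐ ω ∂μ, 0 ≤ Y ω) : Integrable (fun ω => exp (-(lam * Y ω))) μ := by
  refine .of_bound (continuous_exp.comp_aestronglyMeasurable (hY.const_mul lam).neg) 1 ?_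
  filter_upwards [hY0] with ω hω
  rw [norm_of_nonneg (exp_pos _).le, exp_le_one_iff, neg_nonpos]
  exact mul_nonneg hlam hω

lemma condExp_exp_neg_mul_le (hm : m ≤ m0) (hH : 0 < H) (hlam : 0 ≤ lam)
    (hc : c * H ≤ 1 - exp (-(lam * H))) (hY : Integrable Y μ)
    (hYb : ∀ᵐ ω ∂μ, Y ω ∈ Set.Icc 0 H) :
    μ[fun ω => exp (-(lam * Y ω)) | m] ≤ᵐ[μ] fun ω => 1 - c * μ[Y | m] ω := by
  have hchord : μ[fun ω => exp (-(lam * Y ω)) | m] ≤ᵐ[μ] μ[fun ω => 1 - c * Y ω | m] :=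
    condExp_mono (integrable_exp_neg_mul hlam hY.1 (hYb.mono fun _ h => h.1))
      ((integrable_const 1).sub (hY.const_mul c))
      (hYb.mono fun _ => exp_neg_mul_le_one_sub_mul hH hc)
  have hlin : μ[fun ω => 1 - c * Y ω | m] =ᵐ[μ] fun ω => 1 - c * μ[Y | m] ω := by
    filter_upwards [condExp_sub (m := m) (integrable_const (1 : ℝ)) (hY.smul c),
      condExp_smul (m := m) (μ := μ) c Y] with ω hsub hsmul
    change μ[(fun _ => (1 : ℝ)) - c • Y | m] ω = _
    rw [hsub, Pi.sub_apply, hsmul, condExp_const hm]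
    rfl
  exact hchord.trans_eq hlin

lemma condExp_le_of_ae_le (hm : m ≤ m0) (hY : Integrable Y μ) (hYH : ∀ᵐ ω ∂μ, Y ω ≤ H) :
    ∀ᵐ ω ∂μ, μ[Y | m] ω ≤ H := by
  filter_upwards [condExp_mono (m := m) hY (integrable_const H) hYH] with ω hω
  rwa [condExp_const hm] at hω

lemma integral_mul_exp_sub_le (hm : m ≤ m0) (hH : 0 < H) (hlam : 0 ≤ lam) (hc0 : 0 ≤ c)
    (hc : c * H ≤ 1 - exp (-(lam * H))) {W : Ω → ℝ} {R : ℝ} (hW : StronglyMeasurable[m] W)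
    (hW0 : ∀ ω, 0 ≤ W ω) (hWR : ∀ᵐ ω ∂μ, W ω ≤ R) (hY : Integrable Y μ)
    (hYb : ∀ᵐ ω ∂μ, Y ω ∈ Set.Icc 0 H) :
    ∫ ω, W ω * exp (c * μ[Y | m] ω - lam * Y ω) ∂μ ≤ ∫ ω, W ω ∂μ := by
  set V : Ω → ℝ := fun ω => W ω * exp (c * μ[Y | m] ω)
  set E : Ω → ℝ := fun ω => exp (-(lam * Y ω))
  have hV : StronglyMeasurable[m] V :=
    hW.mul (continuous_exp.comp_stronglyMeasurable (stronglyMeasurable_condExp.const_mul c))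
  have hV0 : ∀ ω, 0 ≤ V ω := fun ω => mul_nonneg (hW0 ω) (exp_pos _).le
  have hVR : ∀ᵐ ω ∂μ, ‖V ω‖ ≤ R * exp (c * H) := by
    filter_upwards [hWR, condExp_le_of_ae_le hm hY (hYb.mono fun _ h => h.2)] with ω hWω hYω
    rw [norm_of_nonneg (hV0 ω)]
    exact mul_le_mul hWω (exp_le_exp.2 (by gcongr)) (exp_pos _).le ((hW0 ω).trans hWω)
  have hE : Integrable E μ := integrable_exp_neg_mul hlam hY.1 (hYb.mono fun _ h => h.1)
  have hpull : μ[V * E | m] =ᵐ[μ] V * μ[E | m] :=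
    condExp_stronglyMeasurable_mul_of_bound hm hV hE _ hVR
  have hWint : Integrable W μ :=
    integrable_of_ae_mem_Icc (hW.mono hm).aestronglyMeasurable (hWR.mono fun ω h => ⟨hW0 ω, h⟩)
  calc ∫ ω, W ω * exp (c * μ[Y | m] ω - lam * Y ω) ∂μ = ∫ ω, (V * E) ω ∂μ := by
        simp only [V, E, Pi.mul_apply, sub_eq_add_neg, exp_add, mul_assoc]
    _ = ∫ ω, μ[V * E | m] ω ∂μ := (integral_condExp hm).symm
    _ = ∫ ω, (V * μ[E | m]) ω ∂μ := integral_congr_ae hpull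
    _ ≤ ∫ ω, W ω ∂μ := by
      refine integral_mono_ae (integrable_condExp.congr hpull) hWint ?_
      filter_upwards [condExp_exp_neg_mul_le hm hH hlam hc hY hYb] with ω hω
      calc V ω * μ[E | m] ω ≤ V ω * (1 - c * μ[Y | m] ω) :=
            mul_le_mul_of_nonneg_left hω (hV0 ω)
        _ = W ω * (exp (c * μ[Y | m] ω) * (1 - c * μ[Y | m] ω)) := mul_assoc _ _ _
        _ ≤ W ω := mul_le_of_le_one_right (hW0 ω) (exp_mul_one_sub_le_one _)

end ConditionalBounds

section CompensatedSum

variable {Ω : Type*} {m0 : MeasurableSpace Ω} {μ : Measure Ω} {F : Filtration ℕ m0}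
  {X : ℕ → Ω → ℝ} {c lam H : ℝ}

noncomputable def compensatedSum (μ : Measure Ω) (F : Filtration ℕ m0) (X : ℕ → Ω → ℝ)
    (c lam : ℝ) (n : ℕ) (ω : Ω) : ℝ :=
  ∑ k ∈ Icc 1 n, (c * μ[X k | F (k - 1)] ω - lam * X k ω)

lemma compensatedSum_succ (n : ℕ) (ω : Ω) :
    compensatedSum μ F X c lam (n + 1) ω =
      compensatedSum μ F X c lam n ω + (c * μ[X (n + 1) | F n] ω - lam * X (n + 1) ω) := by
  rw [compensatedSum, compensatedSum, sum_Icc_succ_top (Nat.le_add_left 1 n), Nat.add_sub_cancel]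

lemma compensatedSum_eq (n : ℕ) (ω : Ω) :
    compensatedSum μ F X c lam n ω =
      c * ∑ k ∈ Icc 1 n, μ[X k | F (k - 1)] ω - lam * ∑ k ∈ Icc 1 n, X k ω := by
  rw [compensatedSum, sum_sub_distrib, mul_sum, mul_sum]

lemma stronglyMeasurable_compensatedSum (hX : StronglyAdapted F X) (n : ℕ) :
    StronglyMeasurable[F n] (compensatedSum μ F X c lam n) := by
  refine Finset.stronglyMeasurable_fun_sum _ fun k hk => ?_
  have hkn := (mem_Icc.1 hk).2
  exact (stronglyMeasurable_condExp.mono (F.mono (by omega))).const_mul c |>.sub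
    (((hX k).mono (F.mono hkn)).const_mul lam)

lemma ae_compensatedSum_le [IsFiniteMeasure μ] (hlam : 0 ≤ lam) (hc0 : 0 ≤ c)
    (hX : StronglyAdapted F X) {n : ℕ} (hbdd : ∀ k ∈ Icc 1 n, ∀ᵐ ω ∂μ, X k ω ∈ Set.Icc 0 H) :
    ∀ᵐ ω ∂μ, compensatedSum μ F X c lam n ω ≤ n * (c * H) := by
  have hterm : ∀ k ∈ Icc 1 n, ∀ᵐ ω ∂μ, c * μ[X k | F (k - 1)] ω - lam * X k ω ≤ c * H := by
    intro k hk
    have hint := integrable_of_ae_mem_Icc ((hX k).mono (F.le k)).aestronglyMeasurable (hbdd k hk)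
    filter_upwards [hbdd k hk, condExp_le_of_ae_le (F.le _) hint ((hbdd k hk).mono fun _ h => h.2)]
      with ω hXω hCEω
    nlinarith [mul_nonneg hlam hXω.1]
  filter_upwards [(Filter.eventually_all_finset _).2 hterm] with ω hω
  simpa [compensatedSum] using sum_le_sum hω

lemma integrable_exp_compensatedSum [IsFiniteMeasure μ] (hlam : 0 ≤ lam) (hc0 : 0 ≤ c)
    (hX : StronglyAdapted F X) {n : ℕ} (hbdd : ∀ k ∈ Icc 1 n, ∀ᵐ ω ∂μ, X k ω ∈ Set.Icc 0 H) :
    Integrable (fun ω => exp (compensatedSum μ F X c lam n ω)) μ := by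
  refine .of_bound (continuous_exp.comp_stronglyMeasurable
    ((stronglyMeasurable_compensatedSum hX n).mono (F.le n))).aestronglyMeasurable
      (exp (n * (c * H))) ?_
  filter_upwards [ae_compensatedSum_le hlam hc0 hX hbdd] with ω hω
  rwa [norm_of_nonneg (exp_pos _).le, exp_le_exp]

theorem integral_exp_compensatedSum_le_one [IsProbabilityMeasure μ] (hH : 0 < H)
    (hlam : 0 ≤ lam) (hc0 : 0 ≤ c) (hc : c * H ≤ 1 - exp (-(lam * H)))
    (hX : StronglyAdapted F X) :
    ∀ n, (∀ k ∈ Icc 1 n, ∀ᵐ ω ∂μ, X k ω ∈ Set.Icc 0 H) →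
      ∫ ω, exp (compensatedSum μ F X c lam n ω) ∂μ ≤ 1
  | 0, _ => by simp [compensatedSum]
  | n + 1, hbdd => by
    have hbdd' : ∀ k ∈ Icc 1 n, ∀ᵐ ω ∂μ, X k ω ∈ Set.Icc 0 H :=
      fun k hk => hbdd k (Icc_subset_Icc_right n.le_succ hk)
    have hlast := hbdd (n + 1) (right_mem_Icc.2 (Nat.le_add_left 1 n))
    calc ∫ ω, exp (compensatedSum μ F X c lam (n + 1) ω) ∂μ
        = ∫ ω, exp (compensatedSum μ F X c lam n ω) *
            exp (c * μ[X (n + 1) | F n] ω - lam * X (n + 1) ω) ∂μ := by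
          simp only [compensatedSum_succ, exp_add]
      _ ≤ ∫ ω, exp (compensatedSum μ F X c lam n ω) ∂μ :=
          integral_mul_exp_sub_le (F.le n) hH hlam hc0 hc
            (continuous_exp.comp_stronglyMeasurable (stronglyMeasurable_compensatedSum hX n))
            (fun _ => (exp_pos _).le)
            ((ae_compensatedSum_le hlam hc0 hX hbdd').mono fun _ h => exp_le_exp.2 h)
            (integrable_of_ae_mem_Icc ((hX (n + 1)).mono (F.le _)).aestronglyMeasurable hlast)
            hlast
      _ ≤ 1 := integral_exp_compensatedSum_le_one hH hlam hc0 hc hX n hbdd'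

end CompensatedSum

lemma le_measure_lt_log_inv {Ω : Type*} {m0 : MeasurableSpace Ω} {μ : Measure Ω}
    [IsProbabilityMeasure μ] {S : Ω → ℝ} {δ : ℝ} (hS : Integrable (fun ω => exp (S ω)) μ)
    (hS1 : ∫ ω, exp (S ω) ∂μ ≤ 1) (hδ : 0 < δ) :
    ENNReal.ofReal (1 - δ) ≤ μ {ω | S ω < log δ⁻¹} := by
  have htail : μ.real {ω | log δ⁻¹ ≤ S ω} ≤ δ :=
    calc μ.real {ω | log δ⁻¹ ≤ S ω} ≤ exp (-1 * log δ⁻¹) * mgf S μ 1 :=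
          measure_ge_le_exp_mul_mgf _ zero_le_one (by simpa using hS)
      _ ≤ δ * 1 := by
          rw [neg_one_mul, exp_neg, exp_log (inv_pos.2 hδ), inv_inv]
          gcongr
          simpa [mgf] using hS1
      _ = δ := mul_one δ
  have htail' : μ {ω | log δ⁻¹ ≤ S ω} ≤ ENNReal.ofReal δ :=
    (ENNReal.le_ofReal_iff_toReal_le (measure_ne_top _ _) hδ.le).2 htail
  have hcover : 1 ≤ μ {ω | S ω < log δ⁻¹} + μ {ω | log δ⁻¹ ≤ S ω} :=
    calc 1 = μ Set.univ := measure_univ.symm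
      _ ≤ μ ({ω | S ω < log δ⁻¹} ∪ {ω | log δ⁻¹ ≤ S ω}) :=
          measure_mono fun ω _ => lt_or_ge (S ω) (log δ⁻¹)
      _ ≤ _ := measure_union_le _ _
  calc ENNReal.ofReal (1 - δ) = 1 - ENNReal.ofReal δ := by
        rw [ENNReal.ofReal_sub _ hδ.le, ENNReal.ofReal_one]
    _ ≤ 1 - μ {ω | log δ⁻¹ ≤ S ω} := tsub_le_tsub_left htail' 1
    _ ≤ μ {ω | S ω < log δ⁻¹} := tsub_le_iff_right.2 hcover

lemma le_two_mul_add_of_lt_log_inv {H δ L A C : ℝ} (hH : 0 < H) (hδ0 : 0 < δ) (hδ1 : δ ≤ 1)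
    (hL : 1 ≤ L) (hA : 0 ≤ A) (h : 1 / (2 * H) * C - log 2 / H * A < log δ⁻¹) :
    C ≤ 2 * A + 16 / 3 * H * log (L / δ) + 2 := by
  have hC : C < 2 * log 2 * A + 2 * H * log δ⁻¹ := by
    have hscale : 2 * H * (1 / (2 * H) * C - log 2 / H * A) = C - 2 * log 2 * A := by
      field_simp
    nlinarith [mul_lt_mul_of_pos_left h (by positivity : 0 < 2 * H)]
  have hlog2 : log 2 ≤ 1 := (log_le_sub_one_of_pos two_pos).trans (by norm_num)
  have hlogδ : 0 ≤ log δ⁻¹ := log_nonneg (one_le_inv₀ hδ0 |>.2 hδ1)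
  have hmono : log δ⁻¹ ≤ log (L / δ) :=
    log_le_log (inv_pos.2 hδ0) (le_mul_of_one_le_left (inv_pos.2 hδ0).le hL)
  nlinarith

/-- **Improved online-to-batch conversion for non-negative random variables.**
If `{X_k}` is adapted to the filtration `{F_k}` with `X_k ∈ [0, H]` a.s. and `KH ≥ 2`,
then for any `δ ∈ (0,1)`, with probability at least `1 − δ`,
`Σ_{k=1}^K E[X_k | F_{k−1}] ≤ 2 Σ_{k=1}^K X_k + (16/3) H log(log₂(KH)/δ) + 2`. -/
theorem improved_online_to_batch
    {Ω : Type*} [m0 : MeasurableSpace Ω] (μ : Measure Ω) [IsProbabilityMeasure μ]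
    (F : Filtration ℕ m0) (K : ℕ) (H : ℝ) (hH : 0 < H)
    (X : ℕ → Ω → ℝ) (hadapt : ∀ k, StronglyMeasurable[F k] (X k))
    (hbdd : ∀ k ∈ Finset.Icc 1 K, ∀ᵐ ω ∂μ, X k ω ∈ Set.Icc (0 : ℝ) H)
    (hKH : 2 ≤ (K : ℝ) * H)
    (δ : ℝ) (hδ : δ ∈ Set.Ioo (0 : ℝ) 1) :
    ENNReal.ofReal (1 - δ) ≤
      μ {ω | ∑ k ∈ Finset.Icc 1 K, (μ[X k | F (k - 1)]) ω ≤
          2 * ∑ k ∈ Finset.Icc 1 K, X k ω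
            + (16 / 3) * H * Real.log (Real.logb 2 ((K : ℝ) * H) / δ) + 2} := by
  obtain ⟨hδ0, hδ1⟩ := hδ
  have hlam : 0 ≤ log 2 / H := div_nonneg (log_nonneg one_le_two) hH.le
  have hc0 : 0 ≤ 1 / (2 * H) := by positivity
  have hc : 1 / (2 * H) * H ≤ 1 - exp (-(log 2 / H * H)) := by
    rw [div_mul_cancel₀ _ hH.ne', exp_neg, exp_log two_pos]
    field_simp
    norm_num
  have hlogKH : 1 ≤ logb 2 (K * H) := by
    rwa [le_logb_iff_rpow_le one_lt_two (by linarith), rpow_one]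
  have hexp := integral_exp_compensatedSum_le_one hH hlam hc0 hc hadapt K hbdd
  refine (le_measure_lt_log_inv (integrable_exp_compensatedSum hlam hc0 hadapt hbdd) hexp
    hδ0).trans (measure_mono_ae ?_)
  filter_upwards [(Filter.eventually_all_finset _).2 fun k hk => (hbdd k hk).mono fun _ h => h.1]
    with ω hX hω
  change compensatedSum μ F X _ _ K ω < log δ⁻¹ at hω
  rw [compensatedSum_eq] at hω
  exact le_two_mul_add_of_lt_log_inv hH hδ0 hδ1.le hlogKH (sum_nonneg hX) hω
end

section
/- Error decomposition: For any tuple Q = {Q_h : S × A → ℝ}_{h=1}^H of bounded measurable functions (with Q_{H+1} ≡ 0) and any policies π, π̃ of an episodic MDP M, SubOpt_π^M(π̃) = Σ_{h=1}^H E_π[ E_h^{π̃}(Q_h, Q_{h+1})(s_h, a_h) ] + Q_1(s₁, π̃_1) − V_1^{π̃}(s₁) + SubOpt_π^{M(Q, π̃)}(π̃), where Q_1(s₁, π̃_1) := ∫_A Q_1(s₁, a) π̃_1(da|s₁). -/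
open MeasureTheory
open scoped ENNReal

/-- An episodic time-inhomogeneous MDP: measurable state and action spaces, horizon `H`,
Markov transition kernels `P h : S × A → P(S)`, mean reward functions `r h`, and a fixed
initial state `s1`.  Step indices `h = 1, …, H` are the meaningful ones. -/
structure EpisodicMDP (S A : Type*) [MeasurableSpace S] [MeasurableSpace A] where
  H : ℕ
  P : ℕ → S × A → Measure S
  P_prob : ∀ h sa, IsProbabilityMeasure (P h sa)
  P_meas : ∀ h, Measurable (P h)
  r : ℕ → S × A → ℝ
  r_meas : ∀ h, Measurable (r h)
  s1 : S

variable {S A : Type*} [MeasurableSpace S] [MeasurableSpace A]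

/-- A (Markov, time-inhomogeneous) policy, as a family of action kernels `π h : S → P(A)`. -/
def PolicyKer (S A : Type*) [MeasurableSpace S] [MeasurableSpace A] :=
  ℕ → S → Measure A

/-- `pol` is a genuine policy: each `pol h s` is a probability measure, measurably in `s`. -/
def IsPolicy (pol : PolicyKer S A) : Prop :=
  (∀ h s, IsProbabilityMeasure (pol h s)) ∧ ∀ h, Measurable (pol h)

/-- Backward-recursion helper: `Qaux M rw pol n h` is the action-value function at step `h`
when `n` more reward terms remain (so `n = H + 1 - h` gives `Q_h`, with `Q_{H+1} ≡ 0`). -/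
noncomputable def Qaux (M : EpisodicMDP S A) (rw : ℕ → S × A → ℝ) (pol : PolicyKer S A) :
    ℕ → ℕ → S × A → ℝ
  | 0, _, _ => 0
  | n + 1, h, sa =>
      rw h sa + ∫ s', (∫ a', Qaux M rw pol n (h + 1) (s', a') ∂(pol (h + 1) s')) ∂(M.P h sa)

/-- Action-value function `Q^{pol}_h` in the MDP with transitions of `M` and rewards `rw`
(with the convention `Q_{H+1} ≡ 0`). -/
noncomputable def Qval (M : EpisodicMDP S A) (rw : ℕ → S × A → ℝ) (pol : PolicyKer S A)
    (h : ℕ) : S × A → ℝ :=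
  Qaux M rw pol (M.H + 1 - h) h

/-- Value function `V^{pol}_h`. -/
noncomputable def Vval (M : EpisodicMDP S A) (rw : ℕ → S × A → ℝ) (pol : PolicyKer S A)
    (h : ℕ) (s : S) : ℝ :=
  ∫ a, Qval M rw pol h (s, a) ∂(pol h s)

/-- Law of the state `s_h` (for `h ≥ 1`) along the trajectory generated from the initial
state by the policy `pol`. -/
noncomputable def stateLaw (M : EpisodicMDP S A) (pol : PolicyKer S A) : ℕ → Measure S
  | 0 => Measure.dirac M.s1
  | 1 => Measure.dirac M.s1
  | n + 2 =>
      (((stateLaw M pol (n + 1)).bind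
          (fun s => (pol (n + 1) s).map (fun a => ((s, a) : S × A)))).bind (M.P (n + 1)))

/-- Occupancy measure `d^{pol}_h`: the law of `(s_h, a_h)` under `pol` (for `h ≥ 1`). -/
noncomputable def occLaw (M : EpisodicMDP S A) (pol : PolicyKer S A) (h : ℕ) :
    Measure (S × A) :=
  (stateLaw M pol h).bind (fun s => (pol h s).map (fun a => ((s, a) : S × A)))

/-- The Bellman operator `(T_h^{pol} f)(s,a) = r_h(s,a) + ∫∫ f(s',a') pol_{h+1}(da'|s') P_h(ds'|s,a)`. -/
noncomputable def bellmanOp (M : EpisodicMDP S A) (pol : PolicyKer S A) (h : ℕ)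
    (f : S × A → ℝ) : S × A → ℝ :=
  fun sa => M.r h sa + ∫ s', (∫ a', f (s', a') ∂(pol (h + 1) s')) ∂(M.P h sa)

/-- Bellman error `E_h^{pol}(f_h, f_{h+1}) = T_h^{pol} f_{h+1} − f_h`. -/
noncomputable def bellmanErr (M : EpisodicMDP S A) (pol : PolicyKer S A) (h : ℕ)
    (fh fnext : S × A → ℝ) : S × A → ℝ :=
  fun sa => bellmanOp M pol h fnext sa - fh sa

/-- The reward of the induced MDP `M(Q, pol)`: `r_h − E_h^{pol}(Q_h, Q_{h+1})`. -/
noncomputable def inducedReward (M : EpisodicMDP S A) (pol : PolicyKer S A)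
    (Q : ℕ → S × A → ℝ) : ℕ → S × A → ℝ :=
  fun h sa => M.r h sa - bellmanErr M pol h (Q h) (Q (h + 1)) sa

/-- Sub-optimality of `polT` against the comparator `polC` in the MDP with transitions of
`M` and rewards `rw`. -/
noncomputable def subOpt (M : EpisodicMDP S A) (rw : ℕ → S × A → ℝ)
    (polC polT : PolicyKer S A) : ℝ :=
  Vval M rw polC 1 M.s1 - Vval M rw polT 1 M.s1

/-!
Along the trajectory of a policy, `V_1(s₁)` is the sum over `h` of the expected rewards under
the occupancy measures `d_h`; in particular it is additive in the reward. Hence the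
sub-optimalities in `M` and in `M(Q, π̃)` differ by
`Σ_h E_π[E_h] - V^{π̃}_1(s₁) + V^{π̃}_{1, M(Q, π̃)}(s₁)`. The reward of `M(Q, π̃)` is chosen so
that `Q` satisfies the Bellman equation of `π̃` there exactly, so `Q` is the action-value
function of `π̃` in `M(Q, π̃)` and `V^{π̃}_{1, M(Q, π̃)}(s₁) = Q_1(s₁, π̃_1)`.
-/

open ProbabilityTheory

def BddMeasurable {α : Type*} [MeasurableSpace α] (f : α → ℝ) : Prop :=
  Measurable f ∧ ∃ C, ∀ x, |f x| ≤ C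

lemma abs_integral_le_of_forall_abs_le {α : Type*} [MeasurableSpace α] {μ : Measure α}
    [IsProbabilityMeasure μ] {f : α → ℝ} {C : ℝ} (hC : ∀ x, |f x| ≤ C) :
    |∫ x, f x ∂μ| ≤ C := by
  simpa using norm_integral_le_of_norm_le_const (μ := μ) (f := f) (ae_of_all _ hC)

namespace BddMeasurable

variable {α β : Type*} [MeasurableSpace α] [MeasurableSpace β]

lemma zero : BddMeasurable (0 : α → ℝ) :=
  ⟨measurable_const, 0, by simp⟩

lemma add {f g : α → ℝ} (hf : BddMeasurable f) (hg : BddMeasurable g) :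
    BddMeasurable (f + g) := by
  obtain ⟨hfm, C, hC⟩ := hf
  obtain ⟨hgm, D, hD⟩ := hg
  exact ⟨hfm.add hgm, C + D, fun x => (abs_add_le _ _).trans (add_le_add (hC x) (hD x))⟩

lemma sub {f g : α → ℝ} (hf : BddMeasurable f) (hg : BddMeasurable g) :
    BddMeasurable (f - g) := by
  obtain ⟨hfm, C, hC⟩ := hf
  obtain ⟨hgm, D, hD⟩ := hg
  exact ⟨hfm.sub hgm, C + D, fun x => (abs_sub _ _).trans (add_le_add (hC x) (hD x))⟩

lemma integrable {f : α → ℝ} (hf : BddMeasurable f) (μ : Measure α) [IsFiniteMeasure μ] :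
    Integrable f μ := by
  obtain ⟨hfm, C, hC⟩ := hf
  exact Integrable.of_bound hfm.aestronglyMeasurable C (ae_of_all _ hC)

lemma integral_kernel {f : β → ℝ} (hf : BddMeasurable f) (κ : Kernel α β) [IsMarkovKernel κ] :
    BddMeasurable fun a => ∫ b, f b ∂κ a := by
  obtain ⟨hfm, C, hC⟩ := hf
  exact ⟨hfm.stronglyMeasurable.integral_kernel.measurable, C,
    fun _ => abs_integral_le_of_forall_abs_le hC⟩

lemma integral_kernel_prod_right' {f : α × β → ℝ} (hf : BddMeasurable f) (κ : Kernel α β)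
    [IsMarkovKernel κ] : BddMeasurable fun a => ∫ b, f (a, b) ∂κ a := by
  obtain ⟨hfm, C, hC⟩ := hf
  exact ⟨hfm.stronglyMeasurable.integral_kernel_prod_right'.measurable, C,
    fun _ => abs_integral_le_of_forall_abs_le fun _ => hC _⟩

lemma integral_compProd {f : α × β → ℝ} (hf : BddMeasurable f) (μ : Measure α)
    [IsProbabilityMeasure μ] (κ : Kernel α β) [IsMarkovKernel κ] :
    ∫ x, f x ∂(μ ⊗ₘ κ) = ∫ a, ∫ b, f (a, b) ∂κ a ∂μ :=
  Measure.integral_compProd (hf.integrable _)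

lemma integral_comp {f : β → ℝ} (hf : BddMeasurable f) (μ : Measure α)
    [IsProbabilityMeasure μ] (κ : Kernel α β) [IsMarkovKernel κ] :
    ∫ x, f x ∂(κ ∘ₘ μ) = ∫ a, ∫ b, f b ∂κ a ∂μ := by
  rw [Measure.comp_eq_comp_const_apply, Kernel.integral_comp]
  · simp
  · rw [← Measure.comp_eq_comp_const_apply]
    exact hf.integrable _

end BddMeasurable

def IsPolicy.kernel {pol : PolicyKer S A} (hpol : IsPolicy pol) (h : ℕ) : Kernel S A :=
  ⟨pol h, hpol.2 h⟩

instance {pol : PolicyKer S A} (hpol : IsPolicy pol) (h : ℕ) :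
    IsMarkovKernel (hpol.kernel h) :=
  ⟨hpol.1 h⟩

def EpisodicMDP.transition (M : EpisodicMDP S A) (h : ℕ) : Kernel (S × A) S :=
  ⟨M.P h, M.P_meas h⟩

instance (M : EpisodicMDP S A) (h : ℕ) : IsMarkovKernel (M.transition h) :=
  ⟨M.P_prob h⟩

/-- `(P_h V)(s, a)` for the state-value function `V(s') = ∫ f(s', a') π_{h+1}(da' | s')`. -/
noncomputable def expectNext (M : EpisodicMDP S A) (pol : PolicyKer S A) (h : ℕ)
    (f : S × A → ℝ) : S × A → ℝ :=
  fun sa => ∫ s', (∫ a', f (s', a') ∂(pol (h + 1) s')) ∂(M.P h sa)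

section

variable (M : EpisodicMDP S A) {pol : PolicyKer S A}

lemma BddMeasurable.expectNext (hpol : IsPolicy pol) (h : ℕ) {f : S × A → ℝ}
    (hf : BddMeasurable f) : BddMeasurable (expectNext M pol h f) :=
  (hf.integral_kernel_prod_right' (hpol.kernel (h + 1))).integral_kernel (M.transition h)

lemma BddMeasurable.bellmanErr (hpol : IsPolicy pol) {h : ℕ} (hr : BddMeasurable (M.r h))
    {f g : S × A → ℝ} (hf : BddMeasurable f) (hg : BddMeasurable g) :
    BddMeasurable (bellmanErr M pol h f g) :=
  (hr.add (.expectNext M hpol h hg)).sub hf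

lemma Qaux_succ (rw : ℕ → S × A → ℝ) (n h : ℕ) (sa : S × A) :
    Qaux M rw pol (n + 1) h sa = rw h sa + expectNext M pol h (Qaux M rw pol n (h + 1)) sa :=
  rfl

lemma bddMeasurable_Qaux (hpol : IsPolicy pol) {rw : ℕ → S × A → ℝ}
    (hrw : ∀ h, BddMeasurable (rw h)) (n h : ℕ) : BddMeasurable (Qaux M rw pol n h) := by
  induction n generalizing h with
  | zero => exact .zero
  | succ n ih => exact (hrw h).add (.expectNext M hpol h (ih (h + 1)))

lemma occLaw_eq_comp (hpol : IsPolicy pol) (h : ℕ) :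
    occLaw M pol h = (Kernel.id ×ₖ hpol.kernel h) ∘ₘ stateLaw M pol h := by
  rw [occLaw]
  congr 1
  funext s
  rw [Kernel.prod_apply, Kernel.id_apply, Measure.dirac_prod]
  rfl

lemma isProbabilityMeasure_stateLaw (hpol : IsPolicy pol) :
    ∀ h, IsProbabilityMeasure (stateLaw M pol h)
  | 0 | 1 => Measure.dirac.isProbabilityMeasure
  | n + 2 => by
    have := isProbabilityMeasure_stateLaw hpol (n + 1)
    change IsProbabilityMeasure (M.transition (n + 1) ∘ₘ occLaw M pol (n + 1))
    rw [occLaw_eq_comp M hpol]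
    infer_instance

lemma occLaw_eq_compProd (hpol : IsPolicy pol) (h : ℕ) :
    occLaw M pol h = stateLaw M pol h ⊗ₘ hpol.kernel h := by
  have := isProbabilityMeasure_stateLaw M hpol h
  rw [occLaw_eq_comp M hpol, Measure.compProd_eq_comp_prod]

lemma isProbabilityMeasure_occLaw (hpol : IsPolicy pol) (h : ℕ) :
    IsProbabilityMeasure (occLaw M pol h) := by
  have := isProbabilityMeasure_stateLaw M hpol h
  rw [occLaw_eq_compProd M hpol]
  infer_instance

lemma integral_occLaw (hpol : IsPolicy pol) (h : ℕ) {f : S × A → ℝ} (hf : BddMeasurable f) :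
    ∫ sa, f sa ∂(occLaw M pol h) = ∫ s, ∫ a, f (s, a) ∂(pol h s) ∂(stateLaw M pol h) := by
  have := isProbabilityMeasure_stateLaw M hpol h
  rw [occLaw_eq_compProd M hpol, hf.integral_compProd]
  rfl

lemma integral_expectNext_occLaw (hpol : IsPolicy pol) (m : ℕ) {f : S × A → ℝ}
    (hf : BddMeasurable f) :
    ∫ sa, expectNext M pol (m + 1) f sa ∂(occLaw M pol (m + 1)) =
      ∫ sa, f sa ∂(occLaw M pol (m + 1 + 1)) := by
  have := isProbabilityMeasure_occLaw M hpol (m + 1)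
  rw [integral_occLaw M hpol (m + 2) hf]
  exact ((hf.integral_kernel_prod_right' (hpol.kernel (m + 2))).integral_comp _
    (M.transition (m + 1))).symm

lemma integral_Qaux_occLaw (hpol : IsPolicy pol) {rw : ℕ → S × A → ℝ}
    (hrw : ∀ h, BddMeasurable (rw h)) (n m : ℕ) :
    ∫ sa, Qaux M rw pol n (m + 1) sa ∂(occLaw M pol (m + 1)) =
      ∑ k ∈ Finset.range n, ∫ sa, rw (m + 1 + k) sa ∂(occLaw M pol (m + 1 + k)) := by
  induction n generalizing m with
  | zero => simp [Qaux]
  | succ n ih =>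
    have := isProbabilityMeasure_occLaw M hpol (m + 1)
    have hnext := bddMeasurable_Qaux M hpol hrw n (m + 1 + 1)
    calc ∫ sa, Qaux M rw pol (n + 1) (m + 1) sa ∂(occLaw M pol (m + 1))
        = ∫ sa, rw (m + 1) sa ∂(occLaw M pol (m + 1)) +
            ∫ sa, expectNext M pol (m + 1) (Qaux M rw pol n (m + 1 + 1)) sa
              ∂(occLaw M pol (m + 1)) :=
          integral_add ((hrw _).integrable _)
            ((BddMeasurable.expectNext M hpol _ hnext).integrable _)
      _ = _ := by
        rw [integral_expectNext_occLaw M hpol m hnext, ih (m + 1), Finset.sum_range_succ' _ n,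
          add_comm]
        congr 1
        exact Finset.sum_congr rfl fun k _ => by
          rw [show m + 1 + 1 + k = m + 1 + (k + 1) by omega]

lemma Vval_one_eq_sum_integral_occLaw (hpol : IsPolicy pol) {rw : ℕ → S × A → ℝ}
    (hrw : ∀ h, BddMeasurable (rw h)) :
    Vval M rw pol 1 M.s1 = ∑ h ∈ Finset.Icc 1 M.H, ∫ sa, rw h sa ∂(occLaw M pol h) := by
  have hQ := bddMeasurable_Qaux M hpol hrw M.H 1
  have hV : Vval M rw pol 1 M.s1 = ∫ sa, Qaux M rw pol M.H (0 + 1) sa ∂(occLaw M pol 1) := by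
    rw [integral_occLaw M hpol 1 hQ, show stateLaw M pol 1 = Measure.dirac M.s1 from rfl,
      integral_dirac' (fun s => ∫ a, Qaux M rw pol M.H 1 (s, a) ∂(pol 1 s)) M.s1
        (hQ.integral_kernel_prod_right' (hpol.kernel 1)).1.stronglyMeasurable,
      Vval, Qval, Nat.add_sub_cancel]
  rw [hV, integral_Qaux_occLaw M hpol hrw, ← Finset.Ico_add_one_right_eq_Icc,
    Finset.sum_Ico_eq_sum_range]
  simp only [add_comm 0 1, Nat.add_sub_cancel]

lemma Qaux_inducedReward (Q : ℕ → S × A → ℝ)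
    (hQtop : Q (M.H + 1) = fun _ => 0) (n h : ℕ) (hnh : h + n = M.H + 1) :
    Qaux M (inducedReward M pol Q) pol n h = Q h := by
  induction n generalizing h with
  | zero =>
    obtain rfl : h = M.H + 1 := hnh
    exact hQtop.symm
  | succ n ih =>
    funext sa
    rw [Qaux_succ, ih (h + 1) (by omega)]
    simp only [inducedReward, bellmanErr, bellmanOp, expectNext]
    ring

lemma Vval_inducedReward (Q : ℕ → S × A → ℝ)
    (hQtop : Q (M.H + 1) = fun _ => 0) {h : ℕ} (hh : h ≤ M.H + 1) (s : S) :
    Vval M (inducedReward M pol Q) pol h s = ∫ a, Q h (s, a) ∂(pol h s) := by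
  rw [Vval, Qval, Qaux_inducedReward M Q hQtop _ _ (by omega)]

end

/-- **Error decomposition.**  For any bounded measurable tuple `Q` (with `Q_{H+1} ≡ 0`) and
any policies `polC` (comparator `π`) and `polT` (learned `π̃`),
`SubOpt_π^M(π̃) = Σ_{h=1}^H E_π[E_h^{π̃}(Q_h, Q_{h+1})(s_h,a_h)] + Q_1(s₁, π̃_1) − V_1^{π̃}(s₁)
 + SubOpt_π^{M(Q, π̃)}(π̃)`. -/
theorem error_decomposition
    (M : EpisodicMDP S A) (b : ℝ) (hr : ∀ h sa, |M.r h sa| ≤ b)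
    (polC polT : PolicyKer S A) (hC : IsPolicy polC) (hT : IsPolicy polT)
    (Q : ℕ → S × A → ℝ) (hQmeas : ∀ h, Measurable (Q h))
    (hQbdd : ∀ h, ∃ c : ℝ, ∀ sa, |Q h sa| ≤ c)
    (hQtop : Q (M.H + 1) = fun _ => 0) :
    subOpt M M.r polC polT =
      (∑ h ∈ Finset.Icc 1 M.H,
          ∫ sa, bellmanErr M polT h (Q h) (Q (h + 1)) sa ∂(occLaw M polC h))
        + (∫ a, Q 1 (M.s1, a) ∂(polT 1 M.s1)) - Vval M M.r polT 1 M.s1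
        + subOpt M (inducedReward M polT Q) polC polT := by
  have hr' (h : ℕ) : BddMeasurable (M.r h) := ⟨M.r_meas h, b, hr h⟩
  have hE (h : ℕ) : BddMeasurable (bellmanErr M polT h (Q h) (Q (h + 1))) :=
    (hr' h).bellmanErr M hT ⟨hQmeas h, hQbdd h⟩ ⟨hQmeas (h + 1), hQbdd (h + 1)⟩
  have hI (h : ℕ) : BddMeasurable (inducedReward M polT Q h) := (hr' h).sub (hE h)
  have hsum : ∑ h ∈ Finset.Icc 1 M.H,
        ∫ sa, bellmanErr M polT h (Q h) (Q (h + 1)) sa ∂(occLaw M polC h) =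
      Vval M M.r polC 1 M.s1 - Vval M (inducedReward M polT Q) polC 1 M.s1 := by
    rw [Vval_one_eq_sum_integral_occLaw M hC hr',
      Vval_one_eq_sum_integral_occLaw M hC hI, ← Finset.sum_sub_distrib]
    refine Finset.sum_congr rfl fun h _ => ?_
    have := isProbabilityMeasure_occLaw M hC h
    rw [← integral_sub ((hr' h).integrable _) ((hI h).integrable _)]
    simp [inducedReward]
  rw [subOpt, subOpt, hsum, Vval_inducedReward M Q hQtop le_add_self]
  ring
end

section
/- Regret of multiplicative weights over induced MDPs: Let A be a finite action set with |A| ≥ 2 and let {Q^t}_{t=1}^T be an arbitrary sequence of tuples Q^t = {Q^t_h : S × A → ℝ}_{h=1}^H with max_{h,t} ‖Q^t_h‖_∞ ≤ b. Define the policies π^1_h(·|s) uniform on A and π^{t+1}_h(a|s) ∝ π^t_h(a|s) exp(η Q^t_h(s,a)) for all s, a, h, t. If η = sqrt(ln|A| / (4(e−2) b² T)) and T ≥ ln|A|/(e−2), then for every policy π: Σ_{t=1}^T ( V^π_{1, M(Q^t, π^t)}(s₁) − V^{π^t}_{1, M(Q^t, π^t)}(s₁) ) ≤ 4 H b sqrt(T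 ln|A|). -/
open MeasureTheory
open scoped ENNReal

variable {S A : Type*} [MeasurableSpace S] [MeasurableSpace A]

section FiniteActions

variable [Fintype A]

/-- Backward-recursion helper for value functions with a finite action set and a policy given
by probability weights `p h s a`. -/
noncomputable def QfinAux (M : EpisodicMDP S A) (rw : ℕ → S × A → ℝ)
    (p : ℕ → S → A → ℝ) : ℕ → ℕ → S × A → ℝ
  | 0, _, _ => 0
  | n + 1, h, sa =>
      rw h sa +
        ∫ s', (∑ a' : A, p (h + 1) s' a' * QfinAux M rw p n (h + 1) (s', a')) ∂(M.P h sa)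

/-- Action-value function `Q^{p}_h` (transitions of `M`, rewards `rw`, finite actions). -/
noncomputable def Qfin (M : EpisodicMDP S A) (rw : ℕ → S × A → ℝ) (p : ℕ → S → A → ℝ)
    (h : ℕ) : S × A → ℝ :=
  QfinAux M rw p (M.H + 1 - h) h

/-- Value function `V^{p}_h` (finite actions). -/
noncomputable def Vfin (M : EpisodicMDP S A) (rw : ℕ → S × A → ℝ) (p : ℕ → S → A → ℝ)
    (h : ℕ) (s : S) : ℝ :=
  ∑ a : A, p h s a * Qfin M rw p h (s, a)

/-- Bellman operator (finite actions). -/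
noncomputable def bellmanOpFin (M : EpisodicMDP S A) (p : ℕ → S → A → ℝ) (h : ℕ)
    (f : S × A → ℝ) : S × A → ℝ :=
  fun sa => M.r h sa + ∫ s', (∑ a' : A, p (h + 1) s' a' * f (s', a')) ∂(M.P h sa)

/-- Bellman error `E_h^{p}(f_h, f_{h+1}) = T_h^{p} f_{h+1} − f_h` (finite actions). -/
noncomputable def bellmanErrFin (M : EpisodicMDP S A) (p : ℕ → S → A → ℝ) (h : ℕ)
    (fh fnext : S × A → ℝ) : S × A → ℝ :=
  fun sa => bellmanOpFin M p h fnext sa - fh sa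

/-- Reward of the induced MDP `M(Q, p)` (finite actions). -/
noncomputable def inducedRewardFin (M : EpisodicMDP S A) (p : ℕ → S → A → ℝ)
    (Q : ℕ → S × A → ℝ) : ℕ → S × A → ℝ :=
  fun h sa => M.r h sa - bellmanErrFin M p h (Q h) (Q (h + 1)) sa

/-- Multiplicative-weights iterates: `mwAux Qs η (t-1) = π^t`, i.e. `π^1` is uniform and
`π^{t+1}_h(a|s) ∝ π^t_h(a|s) exp(η Q^t_h(s,a))`. -/
noncomputable def mwAux (Qs : ℕ → ℕ → S × A → ℝ) (η : ℝ) : ℕ → ℕ → S → A → ℝ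
  | 0, _, _, _ => (Fintype.card A : ℝ)⁻¹
  | n + 1, h, s, a =>
      mwAux Qs η n h s a * Real.exp (η * Qs (n + 1) h (s, a)) /
        ∑ a' : A, mwAux Qs η n h s a' * Real.exp (η * Qs (n + 1) h (s, a'))

/-- The `t`-th multiplicative-weights policy `π^t` (for `t ≥ 1`). -/
noncomputable def mwPol (Qs : ℕ → ℕ → S × A → ℝ) (η : ℝ) (t : ℕ) : ℕ → S → A → ℝ :=
  mwAux Qs η (t - 1)

/-!
In the induced MDP `M(Q, π)` the rewards `r_h − E_h^π(Q_h, Q_{h+1})` are exactly those for which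
`Q` is the action-value function of `π`. The performance-difference recursion then writes
`V^{π'}_1 − V^{π}_1` in `M(Q^t, π^t)` as the expectation, along the trajectory of the comparator
`π'`, of `∑_h ⟨π'_h − π^t_h, Q^t_h⟩(s_h)`. The comparator does not depend on `t`, so summing over
rounds puts, at every step and state, the regret of Hedge with gains `Q^t_h(s, ·)` inside the
expectation. The potential `∑ₐ π'(a) log π^t(a)` bounds that regret by `log|A|/η + ηTb²`, and the
choice of `η` makes `H` times this at most `4Hb√(T log|A|)`.
-/

open Finset

section Hedge

variable {α : Type*} [Fintype α]

noncomputable def hedge (η : ℝ) (x : ℕ → α → ℝ) : ℕ → α → ℝ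
  | 0, _ => (Fintype.card α : ℝ)⁻¹
  | n + 1, a =>
      hedge η x n a * Real.exp (η * x (n + 1) a) /
        ∑ a', hedge η x n a' * Real.exp (η * x (n + 1) a')

lemma log_sum_mul_exp_le [Nonempty α] {w y : α → ℝ} {c : ℝ} (hw0 : ∀ a, 0 < w a)
    (hw1 : ∑ a, w a = 1) (hy : ∀ a, |y a| ≤ c) (hc : c ≤ 1) :
    Real.log (∑ a, w a * Real.exp (y a)) ≤ ∑ a, w a * y a + c ^ 2 := by
  have hexp : ∀ a, Real.exp (y a) ≤ 1 + y a + c ^ 2 := fun a => by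
    have hquad := (abs_le.1 (Real.abs_exp_sub_one_sub_id_le ((hy a).trans hc))).2
    nlinarith [abs_nonneg (y a), sq_abs (y a), hy a]
  have hZ : 0 < ∑ a, w a * Real.exp (y a) :=
    sum_pos (fun a _ => mul_pos (hw0 a) (Real.exp_pos _)) univ_nonempty
  calc Real.log (∑ a, w a * Real.exp (y a))
      ≤ ∑ a, w a * Real.exp (y a) - 1 := Real.log_le_sub_one_of_pos hZ
    _ ≤ ∑ a, w a * (1 + y a + c ^ 2) - 1 := by
        gcongr with a
        exacts [(hw0 a).le, hexp a]
    _ = ∑ a, w a * y a + c ^ 2 := by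
        simp only [mul_add, sum_add_distrib, ← sum_mul, mul_one, hw1]
        ring

variable (η : ℝ)

lemma measurable_hedge {β : Type*} [MeasurableSpace β] {x : β → ℕ → α → ℝ}
    (hx : ∀ t a, Measurable fun s => x s t a) (n : ℕ) (a : α) :
    Measurable fun s => hedge η (x s) n a := by
  induction n generalizing a with
  | zero => exact measurable_const
  | succ n ih =>
    have hexp : ∀ a', Measurable fun s => Real.exp (η * x s (n + 1) a') := fun a' =>
      (measurable_const.mul (hx (n + 1) a')).exp
    exact ((ih a).mul (hexp a)).div (Finset.measurable_sum _ fun a' _ => (ih a').mul (hexp a'))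

variable [Nonempty α] (x : ℕ → α → ℝ)

lemma hedge_pos (n : ℕ) (a : α) : 0 < hedge η x n a := by
  induction n generalizing a with
  | zero => simp [hedge, Fintype.card_pos]
  | succ n ih =>
    exact div_pos (mul_pos (ih a) (Real.exp_pos _))
      (sum_pos (fun a' _ => mul_pos (ih a') (Real.exp_pos _)) univ_nonempty)

lemma sum_hedge (n : ℕ) : ∑ a, hedge η x n a = 1 := by
  cases n with
  | zero => simp [hedge]
  | succ n =>
    simp only [hedge, ← sum_div]
    exact div_self (sum_pos (fun a _ => mul_pos (hedge_pos η x n a) (Real.exp_pos _))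
      univ_nonempty).ne'

lemma log_hedge_succ (n : ℕ) (a : α) :
    Real.log (hedge η x (n + 1) a) = Real.log (hedge η x n a) + η * x (n + 1) a
      - Real.log (∑ a', hedge η x n a' * Real.exp (η * x (n + 1) a')) := by
  rw [hedge, Real.log_div (mul_pos (hedge_pos η x n a) (Real.exp_pos _)).ne'
      (sum_pos (fun a' _ => mul_pos (hedge_pos η x n a') (Real.exp_pos _)) univ_nonempty).ne',
    Real.log_mul (hedge_pos η x n a).ne' (Real.exp_pos _).ne', Real.log_exp]

lemma hedge_regret_step {b : ℝ} (hη : 0 ≤ η) (hηb : η * b ≤ 1) (n : ℕ)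
    (hx : ∀ a, |x (n + 1) a| ≤ b) (p : α → ℝ) (hp1 : ∑ a, p a = 1) :
    η * ∑ a, (p a - hedge η x n a) * x (n + 1) a
      ≤ ∑ a, p a * Real.log (hedge η x (n + 1) a) - ∑ a, p a * Real.log (hedge η x n a)
        + (η * b) ^ 2 := by
  have hpot : ∑ a, p a * Real.log (hedge η x (n + 1) a) - ∑ a, p a * Real.log (hedge η x n a)
      = η * ∑ a, p a * x (n + 1) a
        - Real.log (∑ a', hedge η x n a' * Real.exp (η * x (n + 1) a')) := by
    simp only [log_hedge_succ, mul_sub, mul_add, sum_sub_distrib, sum_add_distrib, ← sum_mul,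
      hp1, one_mul, mul_sum, mul_left_comm η]
    ring
  have hlog := log_sum_mul_exp_le (hedge_pos η x n) (sum_hedge η x n)
    (y := fun a => η * x (n + 1) a)
    (fun a => by rw [abs_mul, abs_of_nonneg hη]; exact mul_le_mul_of_nonneg_left (hx a) hη) hηb
  have hsplit : η * ∑ a, (p a - hedge η x n a) * x (n + 1) a
      = η * ∑ a, p a * x (n + 1) a - ∑ a, hedge η x n a * (η * x (n + 1) a) := by
    simp only [sub_mul, sum_sub_distrib, mul_sub, mul_sum, mul_left_comm]
  linarith

theorem hedge_regret {b : ℝ} (hη : 0 < η) (hηb : η * b ≤ 1) (T : ℕ)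
    (hx : ∀ t ∈ Icc 1 T, ∀ a, |x t a| ≤ b) (p : α → ℝ) (hp0 : ∀ a, 0 ≤ p a)
    (hp1 : ∑ a, p a = 1) :
    ∑ t ∈ Icc 1 T, ∑ a, (p a - hedge η x (t - 1) a) * x t a
      ≤ Real.log (Fintype.card α) / η + η * T * b ^ 2 := by
  set Φ : ℕ → ℝ := fun n => ∑ a, p a * Real.log (hedge η x n a)
  have htelescope : ∀ T, (∀ t ∈ Icc 1 T, ∀ a, |x t a| ≤ b) →
      η * ∑ t ∈ Icc 1 T, ∑ a, (p a - hedge η x (t - 1) a) * x t a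
        ≤ Φ T - Φ 0 + T * (η * b) ^ 2 := by
    intro T hx
    induction T with
    | zero => simp
    | succ T ih =>
      rw [sum_Icc_succ_top (by omega), mul_add, Nat.add_sub_cancel]
      have hprev := ih fun t ht => hx t (Icc_subset_Icc_right T.le_succ ht)
      have hstep := hedge_regret_step η x hη.le hηb T (hx (T + 1) (by simp)) p hp1
      push_cast
      linarith
  have hΦT : Φ T ≤ 0 := sum_nonpos fun a _ => mul_nonpos_of_nonneg_of_nonpos (hp0 a)
    (Real.log_nonpos (hedge_pos η x T a).le
      (sum_hedge η x T ▸ single_le_sum (fun a' _ => (hedge_pos η x T a').le) (mem_univ a)))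
  have hΦ0 : Φ 0 = -Real.log (Fintype.card α) := by
    simp only [Φ, hedge, Real.log_inv, ← sum_mul, hp1, one_mul]
  have key := htelescope T hx
  rw [← sub_le_iff_le_add, le_div_iff₀ hη]
  nlinarith

end Hedge

omit [MeasurableSpace S] [MeasurableSpace A] in
lemma mwAux_eq_hedge (Qs : ℕ → ℕ → S × A → ℝ) (η : ℝ) (n h : ℕ) (s : S) :
    mwAux Qs η n h s = hedge η (fun t a => Qs t h (s, a)) n := by
  induction n with
  | zero => rfl
  | succ n ih =>
    funext a
    simp only [mwAux, hedge, ih]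

structure IsPolicyFin (p : ℕ → S → A → ℝ) : Prop where
  nonneg : ∀ h s a, 0 ≤ p h s a
  sum_eq_one : ∀ h s, ∑ a, p h s a = 1
  measurable : ∀ h a, Measurable fun s => p h s a

lemma isPolicyFin_mwPol [Nonempty A] {Qs : ℕ → ℕ → S × A → ℝ}
    (hQm : ∀ t h, Measurable (Qs t h)) (η : ℝ) (t : ℕ) : IsPolicyFin (mwPol Qs η t) where
  nonneg h s a := by rw [mwPol, mwAux_eq_hedge]; exact (hedge_pos _ _ _ a).le
  sum_eq_one h s := by rw [mwPol, mwAux_eq_hedge]; exact sum_hedge _ _ _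
  measurable h a := by
    simp only [mwPol, mwAux_eq_hedge]
    exact measurable_hedge η (fun t a => (hQm t h).comp measurable_prodMk_right) _ a

noncomputable def polAvg (p : ℕ → S → A → ℝ) (h : ℕ) (f : S × A → ℝ) (s : S) : ℝ :=
  ∑ a, p h s a * f (s, a)

omit [MeasurableSpace S] [MeasurableSpace A] in
lemma abs_polAvg_le {p : ℕ → S → A → ℝ} {h : ℕ} (hp0 : ∀ s a, 0 ≤ p h s a)
    (hp1 : ∀ s, ∑ a, p h s a = 1) {f : S × A → ℝ} {C : ℝ} (hf : ∀ sa, |f sa| ≤ C) (s : S) :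
    |polAvg p h f s| ≤ C :=
  calc |∑ a, p h s a * f (s, a)| ≤ ∑ a, |p h s a * f (s, a)| := abs_sum_le_sum_abs _ _
    _ ≤ ∑ a, p h s a * C := by
        gcongr with a
        rw [abs_mul, abs_of_nonneg (hp0 s a)]
        exact mul_le_mul_of_nonneg_left (hf _) (hp0 s a)
    _ = C := by rw [← sum_mul, hp1, one_mul]

lemma measurable_polAvg {p : ℕ → S → A → ℝ} {h : ℕ} (hp : ∀ a, Measurable fun s => p h s a)
    {f : S × A → ℝ} (hf : Measurable f) : Measurable (polAvg p h f) :=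
  Finset.measurable_sum _ fun a _ => (hp a).mul (hf.comp measurable_prodMk_right)

lemma integrable_polAvg {p : ℕ → S → A → ℝ} (hp : IsPolicyFin p) (h : ℕ) {f : S × A → ℝ}
    (hf : Measurable f) {C : ℝ} (hC : ∀ sa, |f sa| ≤ C) (μ : Measure S) [IsFiniteMeasure μ] :
    Integrable (polAvg p h f) μ :=
  .of_bound (measurable_polAvg (hp.measurable h) hf).aestronglyMeasurable C
    (ae_of_all _ fun s => abs_polAvg_le (hp.nonneg h) (hp.sum_eq_one h) hC s)

lemma abs_integral_le_of_abs_le {μ : Measure S} [IsProbabilityMeasure μ] {φ : S → ℝ} {C : ℝ}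
    (hφ : ∀ s, |φ s| ≤ C) : |∫ s, φ s ∂μ| ≤ C := by
  simpa using norm_integral_le_of_norm_le_const (μ := μ)
    (ae_of_all _ fun s => (Real.norm_eq_abs (φ s)).trans_le (hφ s))

lemma sum_integral_le {ι : Type*} {I : Finset ι} {μ : Measure S} [IsProbabilityMeasure μ]
    {f : ι → S → ℝ} (hf : ∀ i ∈ I, Integrable (f i) μ) {C : ℝ} (hC : ∀ s, ∑ i ∈ I, f i s ≤ C) :
    ∑ i ∈ I, ∫ s, f i s ∂μ ≤ C := by
  rw [← integral_finsetSum I hf]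
  calc _ ≤ ∫ _, C ∂μ := integral_mono (integrable_finsetSum I hf) (integrable_const C) hC
    _ = C := by simp

namespace EpisodicMDP

variable (M : EpisodicMDP S A)

omit [Fintype A] in
lemma measurable_integral_P (h : ℕ) {φ : S → ℝ} (hφ : Measurable φ) :
    Measurable fun sa => ∫ s', φ s' ∂M.P h sa :=
  (hφ.stronglyMeasurable.integral_kernel (κ := ⟨M.P h, M.P_meas h⟩)).measurable

lemma QfinAux_succ (rw : ℕ → S × A → ℝ) (p : ℕ → S → A → ℝ) (n h : ℕ) (sa : S × A) :
    QfinAux M rw p (n + 1) h sa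
      = rw h sa + ∫ s', polAvg p (h + 1) (QfinAux M rw p n (h + 1)) s' ∂M.P h sa :=
  rfl

lemma measurable_QfinAux {rw : ℕ → S × A → ℝ} (hrw : ∀ h, Measurable (rw h))
    {p : ℕ → S → A → ℝ} (hp : ∀ h a, Measurable fun s => p h s a) (n h : ℕ) :
    Measurable (QfinAux M rw p n h) := by
  induction n generalizing h with
  | zero => exact measurable_const
  | succ n ih =>
    exact (hrw h).add (M.measurable_integral_P h (measurable_polAvg (hp _) (ih (h + 1))))

lemma abs_QfinAux_le {rw : ℕ → S × A → ℝ} {p : ℕ → S → A → ℝ} (hp0 : ∀ h s a, 0 ≤ p h s a)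
    (hp1 : ∀ h s, ∑ a, p h s a = 1) {B : ℝ} {n h : ℕ}
    (hrw : ∀ k, h ≤ k → k < h + n → ∀ sa, |rw k sa| ≤ B) (sa : S × A) :
    |QfinAux M rw p n h sa| ≤ n * B := by
  induction n generalizing h sa with
  | zero => simp [QfinAux]
  | succ n ih =>
    have := M.P_prob h sa
    have hnext : |∫ s', polAvg p (h + 1) (QfinAux M rw p n (h + 1)) s' ∂M.P h sa| ≤ n * B :=
      abs_integral_le_of_abs_le (abs_polAvg_le (hp0 _) (hp1 _)
        (ih fun k hk hk' => hrw k (by omega) (by omega)))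
    rw [QfinAux_succ]
    push_cast
    linarith [abs_add_le (rw h sa) (∫ s', polAvg p (h + 1) (QfinAux M rw p n (h + 1)) s' ∂M.P h sa),
      hrw h le_rfl (by omega) sa]

lemma inducedRewardFin_apply (p : ℕ → S → A → ℝ) (Q : ℕ → S × A → ℝ) (h : ℕ) (sa : S × A) :
    inducedRewardFin M p Q h sa = Q h sa - ∫ s', polAvg p (h + 1) (Q (h + 1)) s' ∂M.P h sa := by
  simp only [inducedRewardFin, bellmanErrFin, bellmanOpFin, polAvg]
  ring

lemma measurable_inducedRewardFin {p : ℕ → S → A → ℝ} (hp : ∀ h a, Measurable fun s => p h s a)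
    {Q : ℕ → S × A → ℝ} (hQ : ∀ h, Measurable (Q h)) (h : ℕ) :
    Measurable (inducedRewardFin M p Q h) := by
  simp only [funext (M.inducedRewardFin_apply p Q h)]
  exact (hQ h).sub (M.measurable_integral_P h (measurable_polAvg (hp _) (hQ _)))

lemma abs_inducedRewardFin_le {p : ℕ → S → A → ℝ} (hp0 : ∀ h s a, 0 ≤ p h s a)
    (hp1 : ∀ h s, ∑ a, p h s a = 1) {Q : ℕ → S × A → ℝ} {b : ℝ} {h : ℕ}
    (hQ : ∀ sa, |Q h sa| ≤ b) (hQ' : ∀ sa, |Q (h + 1) sa| ≤ b) (sa : S × A) :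
    |inducedRewardFin M p Q h sa| ≤ 2 * b := by
  have := M.P_prob h sa
  rw [inducedRewardFin_apply]
  linarith [abs_sub (Q h sa) (∫ s', polAvg p (h + 1) (Q (h + 1)) s' ∂M.P h sa), hQ sa,
    abs_integral_le_of_abs_le (μ := M.P h sa) (abs_polAvg_le (hp0 (h + 1)) (hp1 (h + 1)) hQ')]

theorem QfinAux_inducedRewardFin_self (Q : ℕ → S × A → ℝ) (p : ℕ → S → A → ℝ)
    (hQtop : Q (M.H + 1) = fun _ => 0) {n h : ℕ} (hnh : h + n = M.H + 1) :
    QfinAux M (inducedRewardFin M p Q) p n h = Q h := by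
  induction n generalizing h with
  | zero =>
    obtain rfl : h = M.H + 1 := by omega
    rw [hQtop]
    rfl
  | succ n ih =>
    funext sa
    rw [QfinAux_succ, ih (by omega), inducedRewardFin_apply]
    ring

/-- `V^{pc}_h − V^{p}_h` in `M(Q, p)` with `n` steps to go, the second value written as the
`p`-average of `Q_h` (`QfinAux_inducedRewardFin_self`). -/
noncomputable def valueGap (Q : ℕ → S × A → ℝ) (p pc : ℕ → S → A → ℝ) (n h : ℕ) (s : S) : ℝ :=
  polAvg pc h (QfinAux M (inducedRewardFin M p Q) pc n h) s - polAvg p h (Q h) s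

lemma Vfin_inducedRewardFin_sub (Q : ℕ → S × A → ℝ) (hQtop : Q (M.H + 1) = fun _ => 0)
    (p pc : ℕ → S → A → ℝ) {h : ℕ} (hh : h ≤ M.H + 1) (s : S) :
    Vfin M (inducedRewardFin M p Q) pc h s - Vfin M (inducedRewardFin M p Q) p h s
      = M.valueGap Q p pc (M.H + 1 - h) h s := by
  rw [Vfin, Vfin, Qfin, Qfin, M.QfinAux_inducedRewardFin_self Q p hQtop (by omega)]
  rfl

lemma valueGap_eq (Q : ℕ → S × A → ℝ) (p pc : ℕ → S → A → ℝ) (n h : ℕ) (s : S) :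
    M.valueGap Q p pc n h s = ∑ a, (pc h s a - p h s a) * Q h (s, a)
      + polAvg pc h (fun sa => QfinAux M (inducedRewardFin M p Q) pc n h sa - Q h sa) s := by
  simp only [valueGap, polAvg, sub_mul, mul_sub, sum_sub_distrib]
  ring

lemma integrable_polAvg_QfinAux_inducedRewardFin {Q : ℕ → S × A → ℝ} {p pc : ℕ → S → A → ℝ}
    (hp : IsPolicyFin p) (hpc : IsPolicyFin pc) (hQm : ∀ h, Measurable (Q h)) {b : ℝ} {n h : ℕ}
    (hQb : ∀ k, h ≤ k → k ≤ h + n → ∀ sa, |Q k sa| ≤ b) (μ : Measure S) [IsFiniteMeasure μ] :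
    Integrable (polAvg pc h (QfinAux M (inducedRewardFin M p Q) pc n h)) μ :=
  integrable_polAvg hpc h
    (M.measurable_QfinAux (M.measurable_inducedRewardFin hp.measurable hQm) hpc.measurable n h)
    (M.abs_QfinAux_le hpc.nonneg hpc.sum_eq_one fun k hk hk' =>
      M.abs_inducedRewardFin_le hp.nonneg hp.sum_eq_one (hQb k hk (by omega))
        (hQb (k + 1) (by omega) (by omega))) μ

lemma integrable_valueGap {Q : ℕ → S × A → ℝ} {p pc : ℕ → S → A → ℝ} (hp : IsPolicyFin p)
    (hpc : IsPolicyFin pc) (hQm : ∀ h, Measurable (Q h)) {b : ℝ} {n h : ℕ}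
    (hQb : ∀ k, h ≤ k → k ≤ h + n → ∀ sa, |Q k sa| ≤ b) (μ : Measure S) [IsFiniteMeasure μ] :
    Integrable (M.valueGap Q p pc n h) μ :=
  (M.integrable_polAvg_QfinAux_inducedRewardFin hp hpc hQm hQb μ).sub
    (integrable_polAvg hp h (hQm h) (hQb h le_rfl (by omega)) μ)

lemma QfinAux_inducedRewardFin_succ_sub {Q : ℕ → S × A → ℝ} {p pc : ℕ → S → A → ℝ}
    (hp : IsPolicyFin p) (hpc : IsPolicyFin pc) (hQm : ∀ h, Measurable (Q h)) {b : ℝ} {n h : ℕ}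
    (hQb : ∀ k, h + 1 ≤ k → k ≤ h + 1 + n → ∀ sa, |Q k sa| ≤ b) (sa : S × A) :
    QfinAux M (inducedRewardFin M p Q) pc (n + 1) h sa - Q h sa
      = ∫ s', M.valueGap Q p pc n (h + 1) s' ∂M.P h sa := by
  have := M.P_prob h sa
  simp only [valueGap]
  rw [QfinAux_succ, inducedRewardFin_apply,
    integral_sub (M.integrable_polAvg_QfinAux_inducedRewardFin hp hpc hQm hQb _)
      (integrable_polAvg hp _ (hQm _) (hQb _ le_rfl (by omega)) _)]
  ring

theorem sum_valueGap_le {ι : Type*} (I : Finset ι) {Q : ι → ℕ → S × A → ℝ}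
    {p : ι → ℕ → S → A → ℝ} {pc : ℕ → S → A → ℝ} {b R : ℝ} (hb : 0 ≤ b)
    (hQb : ∀ i ∈ I, ∀ h ∈ Icc 1 M.H, ∀ sa, |Q i h sa| ≤ b)
    (hQm : ∀ i h, Measurable (Q i h)) (hQtop : ∀ i, Q i (M.H + 1) = fun _ => 0)
    (hp : ∀ i, IsPolicyFin (p i)) (hpc : IsPolicyFin pc)
    (hreg : ∀ h ∈ Icc 1 M.H, ∀ s, ∑ i ∈ I, ∑ a, (pc h s a - p i h s a) * Q i h (s, a) ≤ R)
    {n h : ℕ} (hh : 1 ≤ h) (hnh : h + n = M.H + 1) (s : S) :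
    ∑ i ∈ I, M.valueGap (Q i) (p i) pc n h s ≤ n * R := by
  have hQb' : ∀ i ∈ I, ∀ k, 1 ≤ k → k ≤ M.H + 1 → ∀ sa, |Q i k sa| ≤ b := by
    intro i hi k hk hk' sa
    rcases hk'.lt_or_eq with hlt | rfl
    · exact hQb i hi k (mem_Icc.2 ⟨hk, by omega⟩) sa
    · simpa [hQtop] using hb
  induction n generalizing h s with
  | zero =>
    obtain rfl : h = M.H + 1 := by omega
    simp [valueGap, polAvg, QfinAux, hQtop]
  | succ n ih =>
    have hQb_next : ∀ i ∈ I, ∀ k, h + 1 ≤ k → k ≤ h + 1 + n → ∀ sa, |Q i k sa| ≤ b :=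
      fun i hi k hk hk' => hQb' i hi k (by omega) (by omega)
    have hnext : ∀ sa, ∑ i ∈ I, ∫ s', M.valueGap (Q i) (p i) pc n (h + 1) s' ∂M.P h sa
        ≤ n * R := fun sa =>
      have := M.P_prob h sa
      sum_integral_le (fun i hi => M.integrable_valueGap (hp i) hpc (hQm i) (hQb_next i hi) _)
        fun s' => ih (by omega) (by omega) s'
    calc ∑ i ∈ I, M.valueGap (Q i) (p i) pc (n + 1) h s
        = ∑ i ∈ I, (∑ a, (pc h s a - p i h s a) * Q i h (s, a)
          + ∑ a, pc h s a * ∫ s', M.valueGap (Q i) (p i) pc n (h + 1) s' ∂M.P h (s, a)) :=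
          sum_congr rfl fun i hi => by
            rw [valueGap_eq, polAvg]
            congr 1
            exact sum_congr rfl fun a _ => by
              rw [M.QfinAux_inducedRewardFin_succ_sub (hp i) hpc (hQm i) (hQb_next i hi)]
      _ = ∑ i ∈ I, ∑ a, (pc h s a - p i h s a) * Q i h (s, a)
          + ∑ a, pc h s a
              * ∑ i ∈ I, ∫ s', M.valueGap (Q i) (p i) pc n (h + 1) s' ∂M.P h (s, a) := by
          simp only [sum_add_distrib, mul_sum]
          exact congrArg _ sum_comm
      _ ≤ R + ∑ a, pc h s a * (n * R) :=
          add_le_add (hreg h (mem_Icc.2 ⟨hh, by omega⟩) s)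
            (sum_le_sum fun a _ => mul_le_mul_of_nonneg_left (hnext _) (hpc.nonneg h s a))
      _ = (n + 1 : ℕ) * R := by
          rw [← sum_mul, hpc.sum_eq_one]
          push_cast
          ring

end EpisodicMDP

lemma tuned_rate_bounds {L c b T η : ℝ} (hL : 0 < L) (hb : 0 < b) (hc : 1 / 4 ≤ c) (hc1 : c ≤ 1)
    (hT : L / c ≤ T) (hη : η = √(L / (4 * c * b ^ 2 * T))) :
    0 < η ∧ η * b ≤ 1 ∧ L / η + η * T * b ^ 2 ≤ 4 * b * √(T * L) := by
  have hc0 : 0 < c := by linarith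
  have hT0 : 0 < T := (div_pos hL hc0).trans_le hT
  have hLT : L ≤ c * T := by rwa [div_le_iff₀ hc0, mul_comm] at hT
  have hη0 : 0 < η := hη ▸ Real.sqrt_pos.2 (by positivity)
  have hη2 : η ^ 2 * (4 * c * b ^ 2 * T) = L := by
    rw [hη, Real.sq_sqrt (by positivity)]
    field_simp
  set u := √c
  have hu2 : u ^ 2 = c := Real.sq_sqrt hc0.le
  have hu : 1 / 2 ≤ u := Real.le_sqrt_of_sq_le (by linarith)
  have hu1 : u ≤ 1 := Real.sqrt_le_one.2 hc1
  set w := √(T * L)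
  have hw2 : w ^ 2 = T * L := Real.sq_sqrt (by positivity)
  have hηw : η * w * (2 * b * u) = L := by
    refine (pow_left_inj₀ (by positivity) hL.le two_ne_zero).1 ?_
    linear_combination (4 * b ^ 2 * u ^ 2 * η ^ 2) * hw2 + (4 * b ^ 2 * η ^ 2 * T * L) * hu2
      + L * hη2
  refine ⟨hη0, ?_, ?_⟩
  · have h4 : 4 * (η * b) ^ 2 * (c * T) ≤ 1 * (c * T) := by linear_combination hη2 + hLT
    nlinarith [le_of_mul_le_mul_right h4 (by positivity)]
  · rw [div_add' _ _ _ hη0.ne', div_le_iff₀ hη0]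
    refine le_of_mul_le_mul_left ?_ (by positivity : 0 < 4 * c)
    calc 4 * c * (L + η * T * b ^ 2 * η) = (4 * u ^ 2 + 1) * L := by
          linear_combination (-4 * L) * hu2 + hη2
      _ ≤ 8 * u * L := by nlinarith [mul_nonneg (sub_nonneg.2 hu) (sub_nonneg.2 hu1)]
      _ = 4 * c * (4 * b * w * η) := by linear_combination (-8 * u) * hηw + (16 * b * w * η) * hu2

/-- **Regret of multiplicative weights over induced MDPs.**  For any sequence of value
tuples `{Q^t}` bounded by `b` (with `Q^t_{H+1} ≡ 0`), the multiplicative-weights policies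
`π^1 = uniform`, `π^{t+1} ∝ π^t exp(η Q^t)` with
`η = sqrt(ln|A| / (4(e−2) b² T))` and `T ≥ ln|A|/(e−2)` satisfy, for every policy `π`,
`Σ_{t=1}^T (V^π_{1,M(Q^t,π^t)}(s₁) − V^{π^t}_{1,M(Q^t,π^t)}(s₁)) ≤ 4 H b sqrt(T ln|A|)`. -/
theorem multiplicative_weights_regret
    (M : EpisodicMDP S A) (hA : 2 ≤ Fintype.card A)
    (b : ℝ) (hb : 0 < b) (T : ℕ)
    (Qs : ℕ → ℕ → S × A → ℝ)
    (hQb : ∀ t ∈ Finset.Icc 1 T, ∀ h ∈ Finset.Icc 1 M.H, ∀ sa, |Qs t h sa| ≤ b)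
    (hQm : ∀ t h, Measurable (Qs t h))
    (hQtop : ∀ t, Qs t (M.H + 1) = fun _ => 0)
    (η : ℝ)
    (hη : η = Real.sqrt (Real.log (Fintype.card A) / (4 * (Real.exp 1 - 2) * b ^ 2 * T)))
    (hT : Real.log (Fintype.card A) / (Real.exp 1 - 2) ≤ (T : ℝ))
    (pc : ℕ → S → A → ℝ)
    (hpc0 : ∀ h s a, 0 ≤ pc h s a) (hpc1 : ∀ h s, ∑ a : A, pc h s a = 1)
    (hpcm : ∀ h a, Measurable (fun s => pc h s a)) :
    ∑ t ∈ Finset.Icc 1 T,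
        (Vfin M (inducedRewardFin M (mwPol Qs η t) (Qs t)) pc 1 M.s1
          - Vfin M (inducedRewardFin M (mwPol Qs η t) (Qs t)) (mwPol Qs η t) 1 M.s1)
      ≤ 4 * M.H * b * Real.sqrt (T * Real.log (Fintype.card A)) := by
  have hcard : 1 < (Fintype.card A : ℝ) := by exact_mod_cast hA
  have : Nonempty A := Fintype.card_pos_iff.1 (by omega)
  have he : 1 / 4 ≤ Real.exp 1 - 2 ∧ Real.exp 1 - 2 ≤ 1 := by
    constructor <;> linarith [Real.exp_one_gt_d9, Real.exp_one_lt_d9]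
  obtain ⟨hη0, hηb, hR⟩ := tuned_rate_bounds (Real.log_pos hcard) hb he.1 he.2 hT hη
  have hreg : ∀ h ∈ Finset.Icc 1 M.H, ∀ s, ∑ t ∈ Finset.Icc 1 T, ∑ a,
      (pc h s a - mwPol Qs η t h s a) * Qs t h (s, a)
        ≤ Real.log (Fintype.card A) / η + η * T * b ^ 2 := fun h hh s => by
    simpa only [mwPol, mwAux_eq_hedge] using hedge_regret η (fun t a => Qs t h (s, a)) hη0 hηb T
      (fun t ht a => hQb t ht h hh (s, a)) (pc h s) (hpc0 h s) (hpc1 h s)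
  calc _ = ∑ t ∈ Finset.Icc 1 T, M.valueGap (Qs t) (mwPol Qs η t) pc M.H 1 M.s1 :=
        Finset.sum_congr rfl fun t _ => by
          simpa using M.Vfin_inducedRewardFin_sub (Qs t) (hQtop t) (mwPol Qs η t) pc
            (by omega : 1 ≤ M.H + 1) M.s1
    _ ≤ M.H * (Real.log (Fintype.card A) / η + η * T * b ^ 2) :=
        M.sum_valueGap_le _ hb.le hQb hQm hQtop (isPolicyFin_mwPol hQm η) ⟨hpc0, hpc1, hpcm⟩
          hreg le_rfl (by omega) M.s1
    _ ≤ 4 * M.H * b * Real.sqrt (T * Real.log (Fintype.card A)) := by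
        nlinarith [mul_le_mul_of_nonneg_left hR (Nat.cast_nonneg (α := ℝ) M.H)]

end FiniteActions
end

section
/- Moments of the excess TD loss (squared Bellman residual identity and variance bound): Fix h ∈ [H], a state-action pair (s,a), a policy π̃, and bounded measurable functions f_h, f_{h+1} : S × A → [−b, b]. Let z = (s, a, r, s') where, conditionally on (s,a), the random reward r satisfies |r| ≤ b almost surely and E[r | s,a] = r_h(s,a), and s' has law P_h(·|s,a). Then E[ ΔL_{π̃}(f_h, f_{h+1}; z) | s,a ] = E_h^{π̃}(f_h, f_{h+1})(s,a)², and E[ ΔL_{π̃}(f_h, f_{h+1}; z)² | s,a ] ≤ 36 b² · E_h^{π̃}(f_h, f_{h+1})(s,a)². -/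
/-!
Write `y = r + f_{h+1}(s', π̃_{h+1})`, so that `T_h^{π̃} f_{h+1}(s,a) = E[y]` and
`ΔL = (f_h(s,a) - y)² - (E[y] - y)² = e · (2 (y - E[y]) + e)` with `e = E_h^{π̃}(f_h, f_{h+1})(s,a)`.
Since `y - E[y]` is centred, `E[ΔL] = e²` and `E[ΔL²] = e² (4 Var[y] + e²)`. As `|y| ≤ 2b`,
Popoviciu's inequality gives `Var[y] ≤ 4b²`, and `|e| ≤ 4b`, whence `E[ΔL²] ≤ 32 b² e²`.
-/

open MeasureTheory
open scoped ENNReal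

variable {S A : Type*} [MeasurableSpace S] [MeasurableSpace A]

/-- The TD loss of a transition `z = (s, a, r, s')`:
`l_{π̃}(g, f_{h+1}; z) = (g(s,a) − r − f_{h+1}(s', π̃_{h+1}))²`. -/
noncomputable def tdLoss (pol : PolicyKer S A) (h : ℕ) (g fnext : S × A → ℝ)
    (z : S × A × ℝ × S) : ℝ :=
  (g (z.1, z.2.1) - z.2.2.1 - ∫ a', fnext (z.2.2.2, a') ∂(pol (h + 1) z.2.2.2)) ^ 2

/-- The excess TD loss
`ΔL_{π̃}(f_h, f_{h+1}; z) = l_{π̃}(f_h, f_{h+1}; z) − l_{π̃}(T_h^{π̃} f_{h+1}, f_{h+1}; z)`. -/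
noncomputable def excessTD (M : EpisodicMDP S A) (pol : PolicyKer S A) (h : ℕ)
    (fh fnext : S × A → ℝ) (z : S × A × ℝ × S) : ℝ :=
  tdLoss pol h fh fnext z - tdLoss pol h (bellmanOp M pol h fnext) fnext z

open ProbabilityTheory

section CentredSquareDifference

variable {Ω : Type*} [MeasurableSpace Ω] {μ : Measure Ω} [IsProbabilityMeasure μ] {Y : Ω → ℝ}

lemma sq_sub_sub_sq_sub_eq (c t y : ℝ) :
    (c - y) ^ 2 - (t - y) ^ 2 = (t - c) * (2 * (y - t) + (t - c)) := by
  ring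

lemma integral_sub_integral_eq_zero (hY : Integrable Y μ) : ∫ ω, (Y ω - μ[Y]) ∂μ = 0 := by
  simp [integral_sub hY (integrable_const _)]

theorem integral_sq_sub_sub_sq_sub_integral (hY : Integrable Y μ) (c : ℝ) :
    ∫ ω, ((c - Y ω) ^ 2 - (μ[Y] - Y ω) ^ 2) ∂μ = (μ[Y] - c) ^ 2 := by
  have hcentred : Integrable (fun ω => 2 * (Y ω - μ[Y])) μ :=
    (hY.sub (integrable_const _)).const_mul 2
  simp_rw [sq_sub_sub_sq_sub_eq]
  rw [integral_const_mul, integral_add hcentred (integrable_const _), integral_const_mul,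
    integral_sub_integral_eq_zero hY]
  simp [sq]

theorem integral_sq_sub_sub_sq_sub_integral_sq (hY : MemLp Y 2 μ) (c : ℝ) :
    ∫ ω, ((c - Y ω) ^ 2 - (μ[Y] - Y ω) ^ 2) ^ 2 ∂μ
      = (μ[Y] - c) ^ 2 * (4 * Var[Y; μ] + (μ[Y] - c) ^ 2) := by
  set e := μ[Y] - c
  have hpoint : ∀ ω, ((c - Y ω) ^ 2 - (μ[Y] - Y ω) ^ 2) ^ 2
      = e ^ 2 * (4 * (Y ω - μ[Y]) ^ 2 + (4 * e * (Y ω - μ[Y]) + e ^ 2)) := fun ω => by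
    rw [sq_sub_sub_sq_sub_eq]; ring
  have hcentred : Integrable (fun ω => 4 * e * (Y ω - μ[Y])) μ :=
    ((hY.integrable one_le_two).sub (integrable_const _)).const_mul _
  have hcentred_sq : Integrable (fun ω => 4 * (Y ω - μ[Y]) ^ 2) μ :=
    (hY.sub (memLp_const _)).integrable_sq.const_mul 4
  simp_rw [hpoint]
  rw [integral_const_mul, integral_add hcentred_sq (hcentred.fun_add (integrable_const _)),
    integral_add hcentred (integrable_const _), integral_const_mul,
    integral_const_mul, integral_sub_integral_eq_zero (hY.integrable one_le_two),
    ← variance_eq_integral hY.aemeasurable]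
  simp

theorem integral_sq_sub_sub_sq_sub_integral_sq_le {B c : ℝ} (hYm : AEMeasurable Y μ)
    (hYB : ∀ᵐ ω ∂μ, |Y ω| ≤ B) (hcB : |c| ≤ B) :
    ∫ ω, ((c - Y ω) ^ 2 - (μ[Y] - Y ω) ^ 2) ^ 2 ∂μ ≤ 8 * B ^ 2 * (μ[Y] - c) ^ 2 := by
  have hYB' : ∀ᵐ ω ∂μ, Y ω ∈ Set.Icc (-B) B := hYB.mono fun _ => abs_le.mp
  have hY : MemLp Y 2 μ := memLp_of_bounded hYB' hYm.aestronglyMeasurable 2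
  have hvar : Var[Y; μ] ≤ B ^ 2 := by
    simpa [← two_mul] using variance_le_sq_of_bounded hYB' hYm
  have hmean : |μ[Y]| ≤ B := by
    simpa using norm_integral_le_of_norm_le_const (μ := μ) (f := Y) (by simpa using hYB)
  have herr : (μ[Y] - c) ^ 2 ≤ 4 * B ^ 2 := by
    rw [← sq_abs]
    nlinarith [abs_sub μ[Y] c, abs_nonneg (μ[Y] - c)]
  rw [integral_sq_sub_sub_sq_sub_integral_sq hY]
  nlinarith [sq_nonneg (μ[Y] - c)]

end CentredSquareDifference

/-- `f(s, π̃_h) = ∫ f(s, a) π̃_h(da | s)`. -/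
noncomputable def policyAvg (pol : PolicyKer S A) (h : ℕ) (f : S × A → ℝ) (s : S) : ℝ :=
  ∫ a, f (s, a) ∂(pol h s)

lemma measurable_policyAvg {pol : PolicyKer S A} (hpol : IsPolicy pol) (h : ℕ)
    {f : S × A → ℝ} (hf : Measurable f) : Measurable (policyAvg pol h f) := by
  let κ : Kernel S A := ⟨pol h, hpol.2 h⟩
  have : IsMarkovKernel κ := ⟨hpol.1 h⟩
  exact (hf.stronglyMeasurable.integral_kernel_prod_right' (κ := κ)).measurable

lemma abs_policyAvg_le {pol : PolicyKer S A} (hpol : IsPolicy pol) (h : ℕ) {f : S × A → ℝ}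
    {b : ℝ} (hf : ∀ sa, |f sa| ≤ b) (s : S) : |policyAvg pol h f s| ≤ b := by
  have := hpol.1 h s
  simpa [policyAvg] using norm_integral_le_of_norm_le_const (μ := pol h s) (f := fun a => f (s, a))
    (.of_forall fun a => by simpa using hf (s, a))

lemma excessTD_eq (M : EpisodicMDP S A) (pol : PolicyKer S A) (h : ℕ) (fh fnext : S × A → ℝ)
    (s : S) (a : A) (r : ℝ) (s' : S) :
    excessTD M pol h fh fnext (s, a, r, s')
      = (fh (s, a) - (r + policyAvg pol (h + 1) fnext s')) ^ 2
        - (bellmanOp M pol h fnext (s, a) - (r + policyAvg pol (h + 1) fnext s')) ^ 2 := by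
  simp only [excessTD, tdLoss, policyAvg, sub_sub]

lemma bellmanOp_eq_integral (M : EpisodicMDP S A) (pol : PolicyKer S A) (h : ℕ)
    {fnext : S × A → ℝ} (hV : Measurable (policyAvg pol (h + 1) fnext))
    {b : ℝ} (hVb : ∀ s', |policyAvg pol (h + 1) fnext s'| ≤ b) (s : S) (a : A)
    (ζ : Measure (ℝ × S)) [IsProbabilityMeasure ζ] (hmarg : ζ.map Prod.snd = M.P h (s, a))
    (hrint : Integrable Prod.fst ζ) (hrmean : ∫ z, z.1 ∂ζ = M.r h (s, a)) :
    bellmanOp M pol h fnext (s, a) = ∫ z, (z.1 + policyAvg pol (h + 1) fnext z.2) ∂ζ := by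
  have hVint : Integrable (fun z : ℝ × S => policyAvg pol (h + 1) fnext z.2) ζ :=
    .of_bound (hV.comp measurable_snd).aestronglyMeasurable b (.of_forall fun z => hVb z.2)
  rw [integral_add hrint hVint, hrmean, ← integral_map measurable_snd.aemeasurable
    hV.aestronglyMeasurable, hmarg]
  rfl

theorem excess_td_moments_general
    (M : EpisodicMDP S A) (b : ℝ)
    (pol : PolicyKer S A) (hpol : IsPolicy pol)
    (h : ℕ) (s : S) (a : A)
    (fh fnext : S × A → ℝ) (hfnm : Measurable fnext)
    (hfhb : ∀ sa, fh sa ∈ Set.Icc (-b) b) (hfnb : ∀ sa, fnext sa ∈ Set.Icc (-b) b)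
    (ζ : Measure (ℝ × S)) [IsProbabilityMeasure ζ]
    (hmarg : ζ.map Prod.snd = M.P h (s, a))
    (hrb : ∀ᵐ z ∂ζ, |z.1| ≤ b)
    (hrmean : ∫ z, z.1 ∂ζ = M.r h (s, a)) :
    (∫ z, excessTD M pol h fh fnext (s, a, z.1, z.2) ∂ζ)
        = (bellmanErr M pol h fh fnext (s, a)) ^ 2
    ∧ (∫ z, (excessTD M pol h fh fnext (s, a, z.1, z.2)) ^ 2 ∂ζ)
        ≤ 36 * b ^ 2 * (bellmanErr M pol h fh fnext (s, a)) ^ 2 := by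
  set Y : ℝ × S → ℝ := fun z => z.1 + policyAvg pol (h + 1) fnext z.2
  have hV := measurable_policyAvg hpol (h + 1) hfnm
  have hVb := abs_policyAvg_le hpol (h + 1) (fun sa => abs_le.mpr (hfnb sa))
  have hYm : Measurable Y := measurable_fst.add (hV.comp measurable_snd)
  have hYb : ∀ᵐ z ∂ζ, |Y z| ≤ 2 * b := hrb.mono fun z hz =>
    (abs_add_le _ _).trans (by linarith [hVb z.2])
  have hrint : Integrable Prod.fst ζ := .of_bound measurable_fst.aestronglyMeasurable b hrb
  have hT := bellmanOp_eq_integral M pol h hV hVb s a ζ hmarg hrint hrmean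
  have hb : 0 ≤ b := by linarith [(hfhb (s, a)).1, (hfhb (s, a)).2]
  have hcb : |fh (s, a)| ≤ 2 * b := by linarith [abs_le.mpr (hfhb (s, a))]
  simp only [excessTD_eq, bellmanErr, hT]
  refine ⟨integral_sq_sub_sub_sq_sub_integral (.of_bound hYm.aestronglyMeasurable _ hYb) _, ?_⟩
  calc _ ≤ 8 * (2 * b) ^ 2 * (ζ[Y] - fh (s, a)) ^ 2 :=
        integral_sq_sub_sub_sq_sub_integral_sq_le hYm.aemeasurable hYb hcb
    _ ≤ 36 * b ^ 2 * (ζ[Y] - fh (s, a)) ^ 2 := by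
        gcongr ?_ * _
        nlinarith

/-- **Moments of the excess TD loss.**  Fix a step `h`, a state-action pair `(s,a)`, a policy
`π̃`, and functions `f_h, f_{h+1}` bounded by `b`.  If `ζ` is the conditional joint law of
`(r, s')` given `(s,a)` — so that `|r| ≤ b` a.s., `E[r] = r_h(s,a)`, and the second marginal
of `ζ` is `P_h(·|s,a)` — then
`E[ΔL | s,a] = E_h^{π̃}(f_h,f_{h+1})(s,a)²` and `E[ΔL² | s,a] ≤ 36 b² E_h^{π̃}(f_h,f_{h+1})(s,a)²`. -/
theorem excess_td_moments
    (M : EpisodicMDP S A) (b : ℝ) (hb : 1 ≤ b) (hr : ∀ h sa, |M.r h sa| ≤ b)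
    (pol : PolicyKer S A) (hpol : IsPolicy pol)
    (h : ℕ) (s : S) (a : A)
    (fh fnext : S × A → ℝ) (hfhm : Measurable fh) (hfnm : Measurable fnext)
    (hfhb : ∀ sa, fh sa ∈ Set.Icc (-b) b) (hfnb : ∀ sa, fnext sa ∈ Set.Icc (-b) b)
    (ζ : Measure (ℝ × S)) [IsProbabilityMeasure ζ]
    (hmarg : ζ.map Prod.snd = M.P h (s, a))
    (hrb : ∀ᵐ z ∂ζ, |z.1| ≤ b)
    (hrmean : ∫ z, z.1 ∂ζ = M.r h (s, a)) :
    (∫ z, excessTD M pol h fh fnext (s, a, z.1, z.2) ∂ζ)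
        = (bellmanErr M pol h fh fnext (s, a)) ^ 2
    ∧ (∫ z, (excessTD M pol h fh fnext (s, a, z.1, z.2)) ^ 2 ∂ζ)
        ≤ 36 * b ^ 2 * (bellmanErr M pol h fh fnext (s, a)) ^ 2 :=
  excess_td_moments_general M b pol hpol h s a fh fnext hfnm hfhb hfnb ζ hmarg hrb hrmean
end
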